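/- arXiv:1605.08656 — 12 statements merged into one kernel-verified Lean document; each statement's English description precedes it below -/
import Mathlib

section
/- Representation formula: let f : Ω_D → ℍ be a slice function induced by a stem function F = (F₁, F₂). Then for every α + iβ ∈ D with β > 0 and all imaginary units I, J ∈ 𝕊, one has f(α + Iβ) = (1/2)·[ f(α + Jβ) + f(α − Jβ) − I·(J·(f(α + Jβ) − f(α − Jβ))) ], where all products are quaternion multiplications. -/
/- Identify ℍ with `Quaternion ℝ`. `𝕊 = {I : I^2 = -1}`.  A stem function on a
conjugation-symmetric set `D ⊆ ℂ` is a pair `(F₁, F₂)` with `F₁ (conj z) = F₁ z`,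
`F₂ (conj z) = - F₂ z`.  The slice function `f` induced by it satisfies
`f (α + Iβ) = F₁ (α + iβ) + I * F₂ (α + iβ)` for `α + iβ ∈ D`, `I ∈ 𝕊`. -/

/-- **Representation formula** for slice functions. -/
theorem representation_formula
    (D : Set ℂ) (hne : D.Nonempty)
    (hDsymm : ∀ z ∈ D, (starRingEnd ℂ) z ∈ D)
    (F₁ F₂ : ℂ → Quaternion ℝ)
    (hstem : ∀ z ∈ D,
      F₁ ((starRingEnd ℂ) z) = F₁ z ∧ F₂ ((starRingEnd ℂ) z) = - F₂ z)
    (f : Quaternion ℝ → Quaternion ℝ)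
    (hslice : ∀ z ∈ D, ∀ I : Quaternion ℝ, I ^ 2 = -1 →
      f ((z.re : Quaternion ℝ) + I * (z.im : Quaternion ℝ)) = F₁ z + I * F₂ z)
    (z : ℂ) (hz : z ∈ D) (hβ : 0 < z.im)
    (I J : Quaternion ℝ) (hI : I ^ 2 = -1) (hJ : J ^ 2 = -1) :
    f ((z.re : Quaternion ℝ) + I * (z.im : Quaternion ℝ)) =
      (2 : ℝ)⁻¹ •
        (f ((z.re : Quaternion ℝ) + J * (z.im : Quaternion ℝ))
          + f ((z.re : Quaternion ℝ) - J * (z.im : Quaternion ℝ))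
          - I * (J * (f ((z.re : Quaternion ℝ) + J * (z.im : Quaternion ℝ))
              - f ((z.re : Quaternion ℝ) - J * (z.im : Quaternion ℝ))))) := by
  have hzc : (starRingEnd ℂ) z ∈ D := hDsymm z hz
  have h1 := hslice z hz J hJ
  have h2 := hslice _ hzc J hJ
  have h3 := hslice z hz I hI
  obtain ⟨e1, e2⟩ := hstem z hz
  rw [e1, e2, Complex.conj_re, Complex.conj_im] at h2
  have h2' : f ((z.re : Quaternion ℝ) - J * (z.im : Quaternion ℝ)) = F₁ z - J * F₂ z := by
    have hc : ((-z.im : ℝ) : Quaternion ℝ) = -((z.im : ℝ) : Quaternion ℝ) := by push_cast; ring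
    rw [hc, mul_neg, ← sub_eq_add_neg, mul_neg, ← sub_eq_add_neg] at h2
    exact h2
  rw [h3, h1, h2']
  have hJJ : J * (J * F₂ z) = -F₂ z := by
    rw [← mul_assoc, ← sq, hJ, neg_one_mul]
  have hd : F₁ z + J * F₂ z - (F₁ z - J * F₂ z) = J * F₂ z + J * F₂ z := by abel
  rw [hd, mul_add, hJJ, mul_add, mul_neg]
  have : F₁ z + J * F₂ z + (F₁ z - J * F₂ z) - (-(I * F₂ z) + -(I * F₂ z))
      = (2:ℝ) • (F₁ z + I * F₂ z) := by
    rw [two_smul]; abel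
  rw [this, smul_smul]
  norm_num
end

section
/- General representation formula: let f : Ω_D → ℍ be a slice function. Then for every α + iβ ∈ D with β > 0 and all imaginary units I, J, K ∈ 𝕊 with J ≠ K, one has f(α + Iβ) = (I − K)·(J − K)⁻¹·f(α + Jβ) − (I − J)·(J − K)⁻¹·f(α + Kβ), where the products and the inverse are quaternionic. -/
/- Identify ℍ with `Quaternion ℝ`. `𝕊 = {I : I^2 = -1}`.  A slice function on the
circularization of a conjugation-symmetric set `D ⊆ ℂ` is induced by a stem function
`(F₁, F₂)` via `f (α + Iβ) = F₁ (α + iβ) + I * F₂ (α + iβ)`. -/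

/-- **General representation formula** for slice functions. -/
theorem general_representation_formula
    (D : Set ℂ) (hne : D.Nonempty)
    (hDsymm : ∀ z ∈ D, (starRingEnd ℂ) z ∈ D)
    (F₁ F₂ : ℂ → Quaternion ℝ)
    (hstem : ∀ z ∈ D,
      F₁ ((starRingEnd ℂ) z) = F₁ z ∧ F₂ ((starRingEnd ℂ) z) = - F₂ z)
    (f : Quaternion ℝ → Quaternion ℝ)
    (hslice : ∀ z ∈ D, ∀ I : Quaternion ℝ, I ^ 2 = -1 →
      f ((z.re : Quaternion ℝ) + I * (z.im : Quaternion ℝ)) = F₁ z + I * F₂ z)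
    (z : ℂ) (hz : z ∈ D) (hβ : 0 < z.im)
    (I J K : Quaternion ℝ) (hI : I ^ 2 = -1) (hJ : J ^ 2 = -1) (hK : K ^ 2 = -1)
    (hJK : J ≠ K) :
    f ((z.re : Quaternion ℝ) + I * (z.im : Quaternion ℝ)) =
      (I - K) * (J - K)⁻¹ * f ((z.re : Quaternion ℝ) + J * (z.im : Quaternion ℝ))
        - (I - J) * (J - K)⁻¹ * f ((z.re : Quaternion ℝ) + K * (z.im : Quaternion ℝ)) := by

  rw [hslice z hz I hI, hslice z hz J hJ, hslice z hz K hK]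
  set a := F₁ z
  set b := F₂ z
  have hu : J - K ≠ 0 := sub_ne_zero.mpr hJK
  set v : Quaternion ℝ := (J - K)⁻¹ with hv
  have hJ' : J * J = -1 := by rw [← sq]; exact hJ
  have hK' : K * K = -1 := by rw [← sq]; exact hK
  have hJinv : J⁻¹ = -J := by
    apply inv_eq_of_mul_eq_one_right
    rw [mul_neg, hJ', neg_neg]
  have hKinv : K⁻¹ = -K := by
    apply inv_eq_of_mul_eq_one_right
    rw [mul_neg, hK', neg_neg]
  have e1 : (J - K) * v = 1 := mul_inv_cancel₀ hu
  have e2 : v * (J - K) = 1 := inv_mul_cancel₀ hu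
  have h1 : K * (J - K) * J = J - K := by
    have : K * (J - K) * J = K * (J * J) - (K * K) * J := by noncomm_ring
    rw [this, hJ', hK']; noncomm_ring
  have h2 : J * (J - K) * K = J - K := by
    have : J * (J - K) * K = (J * J) * K - J * (K * K) := by noncomm_ring
    rw [this, hJ', hK']; noncomm_ring
  have e3 : J * v * K = v := by
    have := congrArg (·⁻¹) h1
    simp only [mul_inv_rev, hJinv, hKinv] at this
    calc J * v * K = -(J⁻¹) * v * (-(K⁻¹)) := by rw [hJinv, hKinv]; noncomm_ring
      _ = J⁻¹ * (J - K)⁻¹ * K⁻¹ := by noncomm_ring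
      _ = v := by rw [← mul_inv_rev, ← mul_inv_rev, ← mul_assoc, h1]
  have e4 : K * v * J = v := by
    calc K * v * J = -(K⁻¹) * v * (-(J⁻¹)) := by rw [hJinv, hKinv]; noncomm_ring
      _ = K⁻¹ * (J - K)⁻¹ * J⁻¹ := by noncomm_ring
      _ = v := by rw [← mul_inv_rev, ← mul_inv_rev, ← mul_assoc, h2]
  have expand : (I - K) * v * (a + J * b) - (I - J) * v * (a + K * b)
      = ((J - K) * v) * a + I * (v * (J - K)) * b + (J * v * K) * b - (K * v * J) * b := by
    noncomm_ring
  rw [expand, e1, e2, e3, e4]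
  noncomm_ring
end

section
/- Splitting Lemma: let f : Ω_D → ℍ be a slice regular function, and let J, K ∈ 𝕊 with JK = −KJ (K orthogonal to J). Then there exist functions G, H : D → ℂ, holomorphic on D, such that for every z = α + iβ ∈ D one has f(α + Jβ) = (Re G(z) + J·Im G(z)) + (Re H(z) + J·Im H(z))·K. -/
/-!
A unit imaginary quaternion `J` and an imaginary unit `K` anticommuting with it make `1, J, K, JK`
an orthonormal basis of `ℍ`, so every quaternion is `(a + J b) + (c + J d) K`, and the two complex
coordinates `x ↦ ⟪1, x⟫ + i ⟪J, x⟫` and `x ↦ ⟪K, x⟫ + i ⟪JK, x⟫` turn left multiplication by `J`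
into multiplication by `i`. On the slice `ℂ_J`, `f` is `F₁ + J F₂`, whose real derivative `L`
satisfies `L i = J L 1` by the Cauchy–Riemann system; hence both coordinates of it are holomorphic.
-/

namespace Quaternion

open scoped RealInnerProductSpace
open Complex (I)

variable {J K : ℍ[ℝ]}

theorem normSq_eq_one_of_sq_eq_neg_one (hJ : J ^ 2 = -1) : normSq J = 1 := by
  have h : normSq J ^ 2 = 1 := by rw [← map_pow, hJ, normSq_neg, map_one]
  exact (pow_eq_one_iff_of_nonneg normSq_nonneg two_ne_zero).mp h

theorem re_eq_zero_of_sq_eq_neg_one (hJ : J ^ 2 = -1) : J.re = 0 := by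
  rw [← sq_eq_neg_normSq, hJ, normSq_eq_one_of_sq_eq_neg_one hJ, coe_one]

theorem norm_eq_one_of_sq_eq_neg_one (hJ : J ^ 2 = -1) : ‖J‖ = 1 := by
  have h := normSq_eq_norm_mul_self J
  rw [normSq_eq_one_of_sq_eq_neg_one hJ] at h
  nlinarith [norm_nonneg J]

theorem re_mul_comm (a b : ℍ[ℝ]) : (a * b).re = (b * a).re := by
  simp only [re_mul]; ring

theorem inner_mul_left_eq_neg (hJ : J.re = 0) (u x : ℍ[ℝ]) : ⟪u, J * x⟫ = -⟪J * u, x⟫ := by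
  rw [inner_def, inner_def, star_mul, star_eq_neg.mpr hJ, mul_neg, mul_neg, re_neg, ← mul_assoc,
    re_mul_comm (u * star x), mul_assoc]

theorem re_mul_eq_zero_of_anticomm (hJK : J * K = -(K * J)) : (J * K).re = 0 := by
  have h := re_mul_comm J K
  rw [hJK, re_neg] at h ⊢
  linarith

theorem inner_self_mul_left_eq_zero (hJ : J.re = 0) (x : ℍ[ℝ]) : ⟪x, J * x⟫ = 0 := by
  have h := inner_mul_left_eq_neg hJ x x
  rw [real_inner_comm x (J * x)] at h
  linarith

theorem orthonormal_one_mul_anticomm (hJ : J ^ 2 = -1) (hK : K ^ 2 = -1) (hJK : J * K = -(K * J)) :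
    Orthonormal ℝ ![1, J, K, J * K] := by
  have hJre := re_eq_zero_of_sq_eq_neg_one hJ
  have hKre := re_eq_zero_of_sq_eq_neg_one hK
  have hJKre := re_mul_eq_zero_of_anticomm hJK
  have inner_one_left (x : ℍ[ℝ]) : ⟪1, x⟫ = x.re := by simp [inner_def]
  have inner_one_right (x : ℍ[ℝ]) : ⟪x, 1⟫ = x.re := by simp [inner_def]
  have inner_J_K : ⟪J, K⟫ = 0 := by
    rw [inner_def, star_eq_neg.mpr hKre, mul_neg, re_neg, hJKre, neg_zero]
  have inner_J_JK : ⟪J, J * K⟫ = 0 := by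
    rw [inner_mul_left_eq_neg hJre, ← sq, hJ, inner_neg_left, inner_one_left, hKre, neg_neg]
  rw [orthonormal_iff_ite]
  intro i j
  fin_cases i <;> fin_cases j <;>
    simp [norm_eq_one_of_sq_eq_neg_one hJ, norm_eq_one_of_sq_eq_neg_one hK, inner_one_left,
      inner_one_right, hJre, hKre, hJKre, inner_J_K, inner_J_JK, inner_self_mul_left_eq_zero hJre,
      real_inner_comm]

theorem eq_add_mul_of_anticomm (hJ : J ^ 2 = -1) (hK : K ^ 2 = -1) (hJK : J * K = -(K * J))
    (x : ℍ[ℝ]) :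
    x = ((⟪1, x⟫ : ℝ) + J * (⟪J, x⟫ : ℝ)) + ((⟪K, x⟫ : ℝ) + J * (⟪J * K, x⟫ : ℝ)) * K := by
  have hon := orthonormal_one_mul_anticomm hJ hK hJK
  have hcard : Fintype.card (Fin 4) = Module.finrank ℝ ℍ[ℝ] := by simp [finrank_eq_four]
  let b := OrthonormalBasis.mk hon (hon.linearIndependent.span_eq_top_of_card_eq_finrank hcard).ge
  have h := b.sum_repr' x
  simp only [b, OrthonormalBasis.coe_mk, Fin.sum_univ_four] at h
  conv_lhs => rw [← h]
  simp only [Matrix.cons_val, ← algebraMap_def, Algebra.algebraMap_eq_smul_one, add_mul,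
    mul_smul_comm, smul_mul_assoc, mul_one, one_mul]
  abel

noncomputable def complexCoord (J u : ℍ[ℝ]) : ℍ[ℝ] →L[ℝ] ℂ :=
  Complex.ofRealCLM.comp (innerSL ℝ u) + I • Complex.ofRealCLM.comp (innerSL ℝ (J * u))

@[simp]
theorem complexCoord_re (u x : ℍ[ℝ]) : (complexCoord J u x).re = ⟪u, x⟫ := by
  simp [complexCoord]

@[simp]
theorem complexCoord_im (u x : ℍ[ℝ]) : (complexCoord J u x).im = ⟪J * u, x⟫ := by
  simp [complexCoord]

theorem complexCoord_mul_left (hJ : J ^ 2 = -1) (u x : ℍ[ℝ]) :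
    complexCoord J u (J * x) = I * complexCoord J u x := by
  have hJre := re_eq_zero_of_sq_eq_neg_one hJ
  apply Complex.ext <;>
    simp [inner_mul_left_eq_neg hJre, ← mul_assoc, ← sq, hJ]

theorem differentiableAt_complexCoord_comp (hJ : J ^ 2 = -1) {g : ℂ → ℍ[ℝ]}
    {L : ℂ →L[ℝ] ℍ[ℝ]} {z : ℂ} (hg : HasFDerivAt g L z) (hL : L I = J * L 1) (u : ℍ[ℝ]) :
    DifferentiableAt ℂ (fun w => complexCoord J u (g w)) z :=
  (((complexCoord J u).hasFDerivAt.comp z hg).complexOfReal_hasFDerivAt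
    (by simp [hL, complexCoord_mul_left hJ])).differentiableAt

theorem hasFDerivAt_add_mul_of_cauchyRiemann (hJ : J ^ 2 = -1) {F₁ F₂ : ℂ → ℍ[ℝ]}
    {D₁ D₂ : ℂ →L[ℝ] ℍ[ℝ]} {z : ℂ} (hD₁ : HasFDerivAt F₁ D₁ z) (hD₂ : HasFDerivAt F₂ D₂ z)
    (h1 : D₁ 1 = D₂ I) (hI : D₁ I = -D₂ 1) :
    ∃ L : ℂ →L[ℝ] ℍ[ℝ], HasFDerivAt (fun w => F₁ w + J * F₂ w) L z ∧ L I = J * L 1 := by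
  refine ⟨_, hD₁.add ((ContinuousLinearMap.mul ℝ ℍ[ℝ] J).hasFDerivAt.comp z hD₂), ?_⟩
  simp only [add_apply, ContinuousLinearMap.comp_apply,
    ContinuousLinearMap.mul_apply', hI, h1, mul_add, ← mul_assoc, ← sq, hJ, neg_mul, one_mul]
  abel

end Quaternion

theorem splitting_lemma_general
    (D : Set ℂ)
    (F₁ F₂ : ℂ → Quaternion ℝ)
    (f : Quaternion ℝ → Quaternion ℝ)
    (hslice : ∀ z ∈ D, ∀ I : Quaternion ℝ, I ^ 2 = -1 →
      f ((z.re : Quaternion ℝ) + I * (z.im : Quaternion ℝ)) = F₁ z + I * F₂ z)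
    (hreg : ∀ z ∈ D, ∃ D₁ D₂ : ℂ →L[ℝ] Quaternion ℝ,
      HasFDerivAt F₁ D₁ z ∧ HasFDerivAt F₂ D₂ z ∧
      D₁ 1 = D₂ Complex.I ∧ D₁ Complex.I = - D₂ 1)
    (J K : Quaternion ℝ) (hJ : J ^ 2 = -1) (hK : K ^ 2 = -1)
    (hJK : J * K = - (K * J)) :
    ∃ G H : ℂ → ℂ, DifferentiableOn ℂ G D ∧ DifferentiableOn ℂ H D ∧
      ∀ z ∈ D,
        f ((z.re : Quaternion ℝ) + J * (z.im : Quaternion ℝ)) =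
          (((G z).re : Quaternion ℝ) + J * ((G z).im : Quaternion ℝ))
            + (((H z).re : Quaternion ℝ) + J * ((H z).im : Quaternion ℝ)) * K := by
  have holomorphic (u : Quaternion ℝ) :
      DifferentiableOn ℂ (fun z => Quaternion.complexCoord J u (F₁ z + J * F₂ z)) D := by
    intro z hz
    obtain ⟨D₁, D₂, hD₁, hD₂, h1, hI⟩ := hreg z hz
    obtain ⟨L, hL, hLI⟩ := Quaternion.hasFDerivAt_add_mul_of_cauchyRiemann hJ hD₁ hD₂ h1 hI
    exact (Quaternion.differentiableAt_complexCoord_comp hJ hL hLI u).differentiableWithinAt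
  refine ⟨_, _, holomorphic 1, holomorphic K, fun z hz => ?_⟩
  rw [hslice z hz J hJ]
  simp only [Quaternion.complexCoord_re, Quaternion.complexCoord_im, mul_one]
  exact Quaternion.eq_add_mul_of_anticomm hJ hK hJK _

/-- **Splitting Lemma** for slice regular functions:
for `J, K ∈ 𝕊` with `JK = -KJ` there are functions `G, H : D → ℂ`, holomorphic
on `D`, such that `f (α + Jβ) = (Re G + J Im G) + (Re H + J Im H) K` on `D`. -/
theorem splitting_lemma
    (D : Set ℂ) (hne : D.Nonempty) (hDopen : IsOpen D)
    (hDsymm : ∀ z ∈ D, (starRingEnd ℂ) z ∈ D)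
    (F₁ F₂ : ℂ → Quaternion ℝ)
    (hstem : ∀ z ∈ D,
      F₁ ((starRingEnd ℂ) z) = F₁ z ∧ F₂ ((starRingEnd ℂ) z) = - F₂ z)
    (f : Quaternion ℝ → Quaternion ℝ)
    (hslice : ∀ z ∈ D, ∀ I : Quaternion ℝ, I ^ 2 = -1 →
      f ((z.re : Quaternion ℝ) + I * (z.im : Quaternion ℝ)) = F₁ z + I * F₂ z)
    (hreg : ∀ z ∈ D, ∃ D₁ D₂ : ℂ →L[ℝ] Quaternion ℝ,
      HasFDerivAt F₁ D₁ z ∧ HasFDerivAt F₂ D₂ z ∧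
      D₁ 1 = D₂ Complex.I ∧ D₁ Complex.I = - D₂ 1)
    (J K : Quaternion ℝ) (hJ : J ^ 2 = -1) (hK : K ^ 2 = -1)
    (hJK : J * K = - (K * J)) :
    ∃ G H : ℂ → ℂ, DifferentiableOn ℂ G D ∧ DifferentiableOn ℂ H D ∧
      ∀ z ∈ D,
        f ((z.re : Quaternion ℝ) + J * (z.im : Quaternion ℝ)) =
          (((G z).re : Quaternion ℝ) + J * ((G z).im : Quaternion ℝ))
            + (((H z).re : Quaternion ℝ) + J * ((H z).im : Quaternion ℝ)) * K :=
  splitting_lemma_general D F₁ F₂ f hslice hreg J K hJ hK hJK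
end

section
/- The slice product of two slice regular functions is slice regular: if f and g are slice functions on Ω_D induced by stem functions (F₁, F₂) and (G₁, G₂) respectively, and both are slice regular, then the pair (F₁G₁ − F₂G₂, F₁G₂ + F₂G₁) (pointwise quaternion products) is again a stem function satisfying the Cauchy–Riemann system, so the slice function f·g it induces is slice regular on Ω_D. -/
/- Identify ℍ with `Quaternion ℝ`.  A stem function on a conjugation-symmetric
open set `D ⊆ ℂ` is a pair `(F₁, F₂)` of maps `D → ℍ` with `F₁ (conj z) = F₁ z`
and `F₂ (conj z) = - F₂ z`.  It induces a slice regular function when its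
components are real-differentiable on `D` and satisfy the Cauchy-Riemann system
`∂F₁/∂α = ∂F₂/∂β`, `∂F₁/∂β = -∂F₂/∂α`. -/

/-- **The slice product of slice regular functions is slice regular**: the pair
`(F₁G₁ - F₂G₂, F₁G₂ + F₂G₁)` is again a stem function satisfying the
Cauchy-Riemann system, hence induces a slice regular function on `Ω_D`. -/
theorem slice_product_regular
    (D : Set ℂ) (hne : D.Nonempty) (hDopen : IsOpen D)
    (hDsymm : ∀ z ∈ D, (starRingEnd ℂ) z ∈ D)
    (F₁ F₂ G₁ G₂ : ℂ → Quaternion ℝ)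
    (hstemF : ∀ z ∈ D,
      F₁ ((starRingEnd ℂ) z) = F₁ z ∧ F₂ ((starRingEnd ℂ) z) = - F₂ z)
    (hstemG : ∀ z ∈ D,
      G₁ ((starRingEnd ℂ) z) = G₁ z ∧ G₂ ((starRingEnd ℂ) z) = - G₂ z)
    (hregF : ∀ z ∈ D, ∃ D₁ D₂ : ℂ →L[ℝ] Quaternion ℝ,
      HasFDerivAt F₁ D₁ z ∧ HasFDerivAt F₂ D₂ z ∧
      D₁ 1 = D₂ Complex.I ∧ D₁ Complex.I = - D₂ 1)
    (hregG : ∀ z ∈ D, ∃ D₁ D₂ : ℂ →L[ℝ] Quaternion ℝ,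
      HasFDerivAt G₁ D₁ z ∧ HasFDerivAt G₂ D₂ z ∧
      D₁ 1 = D₂ Complex.I ∧ D₁ Complex.I = - D₂ 1) :
    (∀ z ∈ D,
        (fun w => F₁ w * G₁ w - F₂ w * G₂ w) ((starRingEnd ℂ) z)
            = (fun w => F₁ w * G₁ w - F₂ w * G₂ w) z ∧
        (fun w => F₁ w * G₂ w + F₂ w * G₁ w) ((starRingEnd ℂ) z)
            = - (fun w => F₁ w * G₂ w + F₂ w * G₁ w) z) ∧
    (∀ z ∈ D, ∃ D₁ D₂ : ℂ →L[ℝ] Quaternion ℝ,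
      HasFDerivAt (fun w => F₁ w * G₁ w - F₂ w * G₂ w) D₁ z ∧
      HasFDerivAt (fun w => F₁ w * G₂ w + F₂ w * G₁ w) D₂ z ∧
      D₁ 1 = D₂ Complex.I ∧ D₁ Complex.I = - D₂ 1) := by
  constructor
  · intro z hz
    obtain ⟨hF1, hF2⟩ := hstemF z hz
    obtain ⟨hG1, hG2⟩ := hstemG z hz
    constructor
    · simp only [hF1, hF2, hG1, hG2]
      noncomm_ring
    · simp only [hF1, hF2, hG1, hG2]
      noncomm_ring
  · intro z hz
    obtain ⟨A, C, hA, hC, hAC1, hAC2⟩ := hregF z hz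
    obtain ⟨B, E, hB, hE, hBE1, hBE2⟩ := hregG z hz
    refine ⟨(F₁ z • B + A.smulRight (G₁ z)) - (F₂ z • E + C.smulRight (G₂ z)),
      (F₁ z • E + A.smulRight (G₂ z)) + (F₂ z • B + C.smulRight (G₁ z)), ?_, ?_, ?_, ?_⟩
    · exact (hA.mul' hB).sub (hC.mul' hE)
    · exact (hA.mul' hE).add (hC.mul' hB)
    · simp only [ContinuousLinearMap.add_apply, ContinuousLinearMap.sub_apply,
        ContinuousLinearMap.smul_apply, ContinuousLinearMap.smulRight_apply,
        smul_eq_mul, hAC1, hAC2, hBE1, hBE2]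
      noncomm_ring
    · simp only [ContinuousLinearMap.add_apply, ContinuousLinearMap.sub_apply,
        ContinuousLinearMap.smul_apply, ContinuousLinearMap.smulRight_apply,
        smul_eq_mul, hAC1, hAC2, hBE1, hBE2]
      noncomm_ring
end

section
/- Characterization of real slice functions: let f : Ω_D → ℍ be a slice function induced by the stem function (F₁, F₂). The following are equivalent: (i) F₁ and F₂ take values in ℝ ⊆ ℍ (f is real); (ii) for every J ∈ 𝕊, f maps Ω_D ∩ (ℝ + ℝJ) into ℝ + ℝJ; (iii) f(x^c) = (f(x))^c for every x ∈ Ω_D, where x^c denotes quaternionic conjugation. -/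
/-! Writing `a = F₁ z`, `b = F₂ z`, the slice condition gives `f (α + Iβ) = a + I b` and
`f (α - Iβ) = a - I b` for every `I ∈ 𝕊`; sums and differences of these separate `a` from `I b`.
If both values lie in `ℂ_I = ℝ + ℝI` for all `I`, then so do `a` and `b`, and `ℂ_i ∩ ℂ_j = ℝ`.
If `f` commutes with conjugation, then `a = a^c` and `I b = b^c I` for all `I`; the real part of
the latter, for `I = i, j, k`, kills the imaginary coordinates of `b`. -/

open Quaternion

namespace Quaternion

variable {I J q a b : ℍ[ℝ]}

theorem exists_sq_eq_neg_one : ∃ I : ℍ[ℝ], I ^ 2 = -1 :=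
  ⟨(equivProd ℝ).symm (0, 1, 0, 0), by ext <;> simp [sq]⟩

theorem re_eq_zero_of_sq_eq_neg_one_s4 (hI : I ^ 2 = -1) : I.re = 0 := by
  have hnorm : normSq I = 1 := by
    have h := congrArg normSq hI
    rw [map_pow, normSq_neg, map_one] at h
    nlinarith [normSq_nonneg (a := I)]
  rw [← sq_eq_neg_normSq, hnorm, hI, coe_one]

theorem star_eq_neg_of_sq_eq_neg_one (hI : I ^ 2 = -1) : star I = -I :=
  star_eq_neg.2 (re_eq_zero_of_sq_eq_neg_one_s4 hI)

theorem star_coe_add_mul_coe (hI : I ^ 2 = -1) (α β : ℝ) :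
    star ((α : ℍ[ℝ]) + I * β) = α + -I * β := by
  rw [star_add, star_mul, star_coe, star_coe, star_eq_neg_of_sq_eq_neg_one hI, coe_commutes]

/-- The real plane `ℂ_J = ℝ + ℝJ`. -/
noncomputable def slice (J : ℍ[ℝ]) : Submodule ℝ ℍ[ℝ] :=
  Submodule.span ℝ {1, J}

theorem mem_slice : q ∈ slice J ↔ ∃ s t : ℝ, q = s + t * J := by
  simp only [slice, Submodule.mem_span_pair, coe_mul_eq_smul, ← coe_one, smul_coe, mul_one,
    eq_comm]

theorem slice_neg (J : ℍ[ℝ]) : slice (-J) = slice J := by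
  rw [slice, slice, Submodule.span_insert, Submodule.span_insert, ← Set.neg_singleton,
    Submodule.span_neg]

theorem mul_mem_slice (hJ : J ^ 2 = -1) (hq : q ∈ slice J) : J * q ∈ slice J := by
  obtain ⟨s, t, rfl⟩ := Submodule.mem_span_pair.1 hq
  refine Submodule.mem_span_pair.2 ⟨-t, s, ?_⟩
  rw [mul_add, mul_smul_comm, mul_smul_comm, mul_one, ← sq, hJ, neg_smul, smul_neg, add_comm]

theorem mem_slice_of_add_mul_mem_slice (hJ : J ^ 2 = -1) (hplus : a + J * b ∈ slice J)
    (hminus : a + -J * b ∈ slice (-J)) : a ∈ slice J ∧ b ∈ slice J := by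
  rw [slice_neg, neg_mul, ← sub_eq_add_neg] at hminus
  have ha : a = (1 / 2 : ℝ) • ((a + J * b) + (a - J * b)) := by module
  have hJb : J * b = (1 / 2 : ℝ) • ((a + J * b) - (a - J * b)) := by module
  have hb : b = -(J * (J * b)) := by rw [← mul_assoc, ← sq, hJ, neg_one_mul, neg_neg]
  refine ⟨ha ▸ Submodule.smul_mem _ _ (add_mem hplus hminus), hb ▸ neg_mem (mul_mem_slice hJ ?_)⟩
  exact hJb ▸ Submodule.smul_mem _ _ (sub_mem hplus hminus)

theorem exists_real_of_forall_mem_slice (h : ∀ J : ℍ[ℝ], J ^ 2 = -1 → q ∈ slice J) :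
    ∃ r : ℝ, q = r := by
  obtain ⟨s, t, rfl⟩ := mem_slice.1 (h ((equivProd ℝ).symm (0, 1, 0, 0)) (by ext <;> simp [sq]))
  obtain ⟨s', t', hst⟩ :=
    mem_slice.1 (h ((equivProd ℝ).symm (0, 0, 1, 0)) (by ext <;> simp [sq]))
  have ht : t = 0 := by simpa using congrArg (·.imI) hst
  exact ⟨s, by simp [ht]⟩

theorem star_eq_self_and_mul_eq_star_mul (hI : I ^ 2 = -1)
    (hplus : a + -I * b = star (a + I * b)) (hminus : a + I * b = star (a + -I * b)) :
    star a = a ∧ I * b = star b * I := by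
  simp only [star_add, star_mul, star_neg, star_eq_neg_of_sq_eq_neg_one hI, neg_mul, mul_neg,
    neg_neg] at hplus hminus
  constructor
  · linear_combination (norm := module) (-1 / 2 : ℝ) • hplus - (1 / 2 : ℝ) • hminus
  · linear_combination (norm := module) (1 / 2 : ℝ) • hminus - (1 / 2 : ℝ) • hplus

theorem exists_real_of_forall_mul_eq_star_mul
    (h : ∀ I : ℍ[ℝ], I ^ 2 = -1 → I * q = star q * I) : ∃ r : ℝ, q = r := by
  have hi := congrArg (·.re) (h ((equivProd ℝ).symm (0, 1, 0, 0)) (by ext <;> simp [sq]))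
  have hj := congrArg (·.re) (h ((equivProd ℝ).symm (0, 0, 1, 0)) (by ext <;> simp [sq]))
  have hk := congrArg (·.re) (h ((equivProd ℝ).symm (0, 0, 0, 1)) (by ext <;> simp [sq]))
  simp only [re_mul, re_equivProd_symm_apply, imI_equivProd_symm_apply, imJ_equivProd_symm_apply,
    imK_equivProd_symm_apply, re_star, imI_star, imJ_star, imK_star, zero_mul, one_mul, mul_zero,
    mul_one, zero_sub, sub_zero, sub_neg_eq_add, zero_add, sub_self] at hi hj hk
  exact ⟨q.re, by ext <;> simp <;> linarith⟩

theorem exists_real_and_exists_real_iff_forall_add_mul_mem_slice :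
    ((∃ r : ℝ, a = r) ∧ ∃ r : ℝ, b = r) ↔ ∀ J : ℍ[ℝ], J ^ 2 = -1 → a + J * b ∈ slice J := by
  constructor
  · rintro ⟨⟨r, rfl⟩, t, rfl⟩ J -
    exact mem_slice.2 ⟨r, t, by rw [coe_commutes]⟩
  · intro h
    have hab (J : ℍ[ℝ]) (hJ : J ^ 2 = -1) : a ∈ slice J ∧ b ∈ slice J :=
      mem_slice_of_add_mul_mem_slice hJ (h J hJ) (h (-J) (by rwa [neg_sq]))
    exact ⟨exists_real_of_forall_mem_slice fun J hJ => (hab J hJ).1,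
      exists_real_of_forall_mem_slice fun J hJ => (hab J hJ).2⟩

theorem exists_real_and_exists_real_iff_forall_add_neg_mul_eq_star :
    ((∃ r : ℝ, a = r) ∧ ∃ r : ℝ, b = r) ↔
      ∀ I : ℍ[ℝ], I ^ 2 = -1 → a + -I * b = star (a + I * b) := by
  constructor
  · rintro ⟨⟨r, rfl⟩, t, rfl⟩ I hI
    rw [star_coe_add_mul_coe hI]
  · intro h
    have hab (I : ℍ[ℝ]) (hI : I ^ 2 = -1) : star a = a ∧ I * b = star b * I := by
      refine star_eq_self_and_mul_eq_star_mul hI (h I hI) ?_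
      simpa only [neg_neg] using h (-I) (by rwa [neg_sq])
    obtain ⟨I, hI⟩ := exists_sq_eq_neg_one
    exact ⟨⟨a.re, star_eq_self.1 (hab I hI).1⟩,
      exists_real_of_forall_mul_eq_star_mul fun I hI => (hab I hI).2⟩

end Quaternion

theorem real_slice_function_characterization_general
    (D : Set ℂ)
    (F₁ F₂ : ℂ → Quaternion ℝ)
    (f : Quaternion ℝ → Quaternion ℝ)
    (hslice : ∀ z ∈ D, ∀ I : Quaternion ℝ, I ^ 2 = -1 →
      f ((z.re : Quaternion ℝ) + I * (z.im : Quaternion ℝ)) = F₁ z + I * F₂ z) :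
    ((∀ z ∈ D, (∃ r : ℝ, F₁ z = (r : Quaternion ℝ)) ∧ (∃ r : ℝ, F₂ z = (r : Quaternion ℝ)))
      ↔ (∀ J : Quaternion ℝ, J ^ 2 = -1 → ∀ z ∈ D,
          ∃ s t : ℝ, f ((z.re : Quaternion ℝ) + J * (z.im : Quaternion ℝ))
            = (s : Quaternion ℝ) + (t : Quaternion ℝ) * J))
    ∧
    ((∀ z ∈ D, (∃ r : ℝ, F₁ z = (r : Quaternion ℝ)) ∧ (∃ r : ℝ, F₂ z = (r : Quaternion ℝ)))
      ↔ (∀ z ∈ D, ∀ I : Quaternion ℝ, I ^ 2 = -1 →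
          f (star ((z.re : Quaternion ℝ) + I * (z.im : Quaternion ℝ)))
            = star (f ((z.re : Quaternion ℝ) + I * (z.im : Quaternion ℝ))))) := by
  have preserves_slices_iff (z : ℂ) (hz : z ∈ D) :
      ((∃ r : ℝ, F₁ z = r) ∧ ∃ r : ℝ, F₂ z = r) ↔
        ∀ J : ℍ[ℝ], J ^ 2 = -1 → ∃ s t : ℝ, f (z.re + J * z.im) = s + t * J :=
    exists_real_and_exists_real_iff_forall_add_mul_mem_slice.trans <|
      forall₂_congr fun J hJ => by rw [hslice z hz J hJ, mem_slice]
  refine ⟨(forall₂_congr preserves_slices_iff).trans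
    ⟨fun h J hJ z hz => h z hz J hJ, fun h z hz J hJ => h J hJ z hz⟩,
    forall₂_congr fun z hz => ?_⟩
  refine exists_real_and_exists_real_iff_forall_add_neg_mul_eq_star.trans <|
    forall₂_congr fun I hI => ?_
  rw [star_coe_add_mul_coe hI, hslice z hz I hI, hslice z hz (-I) (by rwa [neg_sq])]

/-- **Characterization of real slice functions**: the following are equivalent:
(i) the stem components `F₁, F₂` are real valued;
(ii) for every `J ∈ 𝕊`, `f` maps `Ω_D ∩ (ℝ + ℝJ)` into `ℝ + ℝJ`;
(iii) `f (x^c) = (f x)^c` on `Ω_D`. -/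
theorem real_slice_function_characterization
    (D : Set ℂ) (hne : D.Nonempty)
    (hDsymm : ∀ z ∈ D, (starRingEnd ℂ) z ∈ D)
    (F₁ F₂ : ℂ → Quaternion ℝ)
    (hstem : ∀ z ∈ D,
      F₁ ((starRingEnd ℂ) z) = F₁ z ∧ F₂ ((starRingEnd ℂ) z) = - F₂ z)
    (f : Quaternion ℝ → Quaternion ℝ)
    (hslice : ∀ z ∈ D, ∀ I : Quaternion ℝ, I ^ 2 = -1 →
      f ((z.re : Quaternion ℝ) + I * (z.im : Quaternion ℝ)) = F₁ z + I * F₂ z) :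
    ((∀ z ∈ D, (∃ r : ℝ, F₁ z = (r : Quaternion ℝ)) ∧ (∃ r : ℝ, F₂ z = (r : Quaternion ℝ)))
      ↔ (∀ J : Quaternion ℝ, J ^ 2 = -1 → ∀ z ∈ D,
          ∃ s t : ℝ, f ((z.re : Quaternion ℝ) + J * (z.im : Quaternion ℝ))
            = (s : Quaternion ℝ) + (t : Quaternion ℝ) * J))
    ∧
    ((∀ z ∈ D, (∃ r : ℝ, F₁ z = (r : Quaternion ℝ)) ∧ (∃ r : ℝ, F₂ z = (r : Quaternion ℝ)))
      ↔ (∀ z ∈ D, ∀ I : Quaternion ℝ, I ^ 2 = -1 →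
          f (star ((z.re : Quaternion ℝ) + I * (z.im : Quaternion ℝ)))
            = star (f ((z.re : Quaternion ℝ) + I * (z.im : Quaternion ℝ))))) :=
  real_slice_function_characterization_general D F₁ F₂ f hslice
end

section
/- Characterization of slice constant functions: assume D ∩ ℝ = ∅ and D⁺ = D ∩ {z : Im z > 0} is nonempty and connected. Fix J ∈ 𝕊. A slice function g : Ω_D → ℍ is slice constant (i.e. its inducing stem function is locally constant on D) if and only if there exist quaternions q₊, q₋ ∈ ℍ such that g(α + Iβ) = (1 + I·J)·q₊ + (1 − I·J)·q₋ for all α + iβ ∈ D with β > 0 and all I ∈ 𝕊. -/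
/-!
On the upper half `D⁺` a locally constant stem function is constant, say `(a, b)`, and
`a + I b = (1 + I J) q₊ + (1 - I J) q₋` with `q₊ = (a - J b)/2`, `q₋ = (a + J b)/2`.
Conversely, evaluating the formula at `I = J` and `I = -J` makes one of the factors `1 ± I J`
vanish each time and recovers `F₁ = q₊ + q₋`, `F₂ = J (q₊ - q₋)` on `D⁺`; the stem
symmetries transport this to `D⁻`, and since `D` avoids the real axis the two open half-planes
separate it, so the stem function is locally constant.
-/

def LocallyConstantOn {X Y : Type*} [TopologicalSpace X] (F : X → Y) (D : Set X) : Prop :=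
  ∀ z ∈ D, ∃ U : Set X, IsOpen U ∧ z ∈ U ∧ ∀ w ∈ U ∩ D, F w = F z

theorem LocallyConstantOn.isLocallyConstant_domRestrict {X Y : Type*} [TopologicalSpace X]
    {F : X → Y} {D : Set X} (h : LocallyConstantOn F D) :
    IsLocallyConstant (D.domRestrict F) := by
  rw [IsLocallyConstant.iff_exists_open]
  rintro ⟨x, hx⟩
  obtain ⟨U, hU, hxU, hFU⟩ := h x hx
  exact ⟨Subtype.val ⁻¹' U, hU.preimage continuous_subtype_val, hxU,
    fun ⟨y, hy⟩ hyU => hFU y ⟨hyU, hy⟩⟩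

theorem LocallyConstantOn.apply_eq_of_isPreconnected {X Y : Type*} [TopologicalSpace X]
    {F : X → Y} {D S : Set X} (h : LocallyConstantOn F D) (hS : IsPreconnected S) (hSD : S ⊆ D)
    {x y : X} (hx : x ∈ S) (hy : y ∈ S) : F x = F y := by
  have hS' : IsPreconnected ((Subtype.val : D → X) ⁻¹' S) := by
    rwa [← Topology.IsInducing.subtypeVal.isPreconnected_image, Subtype.image_preimage_coe,
      Set.inter_eq_right.mpr hSD]
  exact h.isLocallyConstant_domRestrict.apply_eq_of_isPreconnected hS'
    (x := ⟨x, hSD hx⟩) (y := ⟨y, hSD hy⟩) hx hy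

theorem locallyConstantOn_of_eq_on_half_planes {Y : Type*} {F : ℂ → Y} {D : Set ℂ}
    {cpos cneg : Y} (hD : ∀ z ∈ D, z.im ≠ 0) (hpos : ∀ z ∈ D, 0 < z.im → F z = cpos)
    (hneg : ∀ z ∈ D, z.im < 0 → F z = cneg) : LocallyConstantOn F D := by
  intro z hz
  rcases (hD z hz).lt_or_gt with him | him
  · exact ⟨{w | w.im < 0}, isOpen_lt Complex.continuous_im continuous_const, him,
      fun w ⟨hw, hwD⟩ => (hneg w hwD hw).trans (hneg z hz him).symm⟩
  · exact ⟨{w | 0 < w.im}, isOpen_lt continuous_const Complex.continuous_im, him,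
      fun w ⟨hw, hwD⟩ => (hpos w hwD hw).trans (hpos z hz him).symm⟩

section SliceAlgebra

variable {A : Type*} [Ring A] [Algebra ℝ A] {I J : A}

theorem add_mul_eq_one_add_mul_add_one_sub_mul (hJ : J * J = -1) (a b : A) :
    a + I * b =
      (1 + I * J) * ((2⁻¹ : ℝ) • (a - J * b)) + (1 - I * J) * ((2⁻¹ : ℝ) • (a + J * b)) := by
  have expand : (1 + I * J) * (a - J * b) + (1 - I * J) * (a + J * b)
      = a + a - I * (J * J) * b - I * (J * J) * b := by
    noncomm_ring
  rw [mul_smul_comm, mul_smul_comm, ← smul_add, expand, hJ]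
  simp only [mul_neg_one, neg_mul, sub_neg_eq_add]
  module

theorem eq_add_and_eq_mul_sub_of_add_mul_eq (hJ : J * J = -1) {a b p m : A}
    (hplus : a + J * b = (1 + J * J) * p + (1 - J * J) * m)
    (hminus : a + (-J) * b = (1 + (-J) * J) * p + (1 - (-J) * J) * m) :
    a = p + m ∧ b = J * (p - m) := by
  simp only [neg_mul, hJ, neg_neg, add_neg_cancel, sub_self, sub_neg_eq_add, zero_mul, zero_add,
    add_zero, one_add_one_eq_two, two_mul] at hplus hminus
  have htwo_a : (2 : ℝ) • a = (2 : ℝ) • (p + m) := by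
    calc (2 : ℝ) • a = (a + J * b) + (a + -(J * b)) := by module
      _ = (2 : ℝ) • (p + m) := by rw [hplus, hminus]; module
  have htwo_Jb : (2 : ℝ) • (J * b) = (2 : ℝ) • (m - p) := by
    calc (2 : ℝ) • (J * b) = (a + J * b) - (a + -(J * b)) := by module
      _ = (2 : ℝ) • (m - p) := by rw [hplus, hminus]; module
  have hJb : J * b = m - p := smul_right_injective A two_ne_zero htwo_Jb
  refine ⟨smul_right_injective A two_ne_zero htwo_a, ?_⟩
  calc b = -(J * J) * b := by rw [hJ, neg_neg, one_mul]
    _ = J * (p - m) := by rw [neg_mul, mul_assoc, hJb]; noncomm_ring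

end SliceAlgebra

theorem slice_constant_characterization_general
    (D : Set ℂ)
    (hDsymm : ∀ z ∈ D, (starRingEnd ℂ) z ∈ D)
    (hDreal : ∀ z ∈ D, z.im ≠ 0)
    (hDplus : IsConnected (D ∩ {z : ℂ | 0 < z.im}))
    (J : Quaternion ℝ) (hJ : J ^ 2 = -1)
    (F₁ F₂ : ℂ → Quaternion ℝ)
    (hstem : ∀ z ∈ D,
      F₁ ((starRingEnd ℂ) z) = F₁ z ∧ F₂ ((starRingEnd ℂ) z) = - F₂ z)
    (g : Quaternion ℝ → Quaternion ℝ)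
    (hslice : ∀ z ∈ D, ∀ I : Quaternion ℝ, I ^ 2 = -1 →
      g ((z.re : Quaternion ℝ) + I * (z.im : Quaternion ℝ)) = F₁ z + I * F₂ z) :
    ((∀ z ∈ D, ∃ U : Set ℂ, IsOpen U ∧ z ∈ U ∧ ∀ w ∈ U ∩ D, F₁ w = F₁ z) ∧
     (∀ z ∈ D, ∃ U : Set ℂ, IsOpen U ∧ z ∈ U ∧ ∀ w ∈ U ∩ D, F₂ w = F₂ z))
    ↔
    (∃ qp qm : Quaternion ℝ, ∀ z ∈ D, 0 < z.im → ∀ I : Quaternion ℝ, I ^ 2 = -1 →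
      g ((z.re : Quaternion ℝ) + I * (z.im : Quaternion ℝ))
        = (1 + I * J) * qp + (1 - I * J) * qm) := by
  have hJJ : J * J = -1 := by rw [← sq, hJ]
  constructor
  · rintro ⟨h₁, h₂⟩
    obtain ⟨⟨z₀, hz₀⟩, hconn⟩ := hDplus
    refine ⟨(2⁻¹ : ℝ) • (F₁ z₀ - J * F₂ z₀), (2⁻¹ : ℝ) • (F₁ z₀ + J * F₂ z₀),
      fun z hz him I hI => ?_⟩
    have hconst : ∀ F : ℂ → Quaternion ℝ, LocallyConstantOn F D → F z = F z₀ :=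
      fun F hF => hF.apply_eq_of_isPreconnected hconn Set.inter_subset_left ⟨hz, him⟩ hz₀
    rw [hslice z hz I hI, hconst F₁ h₁, hconst F₂ h₂]
    exact add_mul_eq_one_add_mul_add_one_sub_mul hJJ _ _
  · rintro ⟨qp, qm, hq⟩
    have hnegJ : (-J) ^ 2 = -1 := by rw [neg_sq, hJ]
    have hupper : ∀ z ∈ D, 0 < z.im → F₁ z = qp + qm ∧ F₂ z = J * (qp - qm) :=
      fun z hz him => eq_add_and_eq_mul_sub_of_add_mul_eq hJJ
        ((hslice z hz J hJ).symm.trans (hq z hz him J hJ))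
        ((hslice z hz (-J) hnegJ).symm.trans (hq z hz him (-J) hnegJ))
    have hlower : ∀ z ∈ D, z.im < 0 → F₁ z = qp + qm ∧ F₂ z = -(J * (qp - qm)) := by
      intro z hz him
      obtain ⟨hF₁, hF₂⟩ := hupper _ (hDsymm z hz) (by simpa using him)
      obtain ⟨hconj₁, hconj₂⟩ := hstem z hz
      exact ⟨hconj₁ ▸ hF₁, by rw [← hF₂, hconj₂, neg_neg]⟩
    exact ⟨locallyConstantOn_of_eq_on_half_planes hDreal
        (fun z hz h => (hupper z hz h).1) (fun z hz h => (hlower z hz h).1),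
      locallyConstantOn_of_eq_on_half_planes hDreal
        (fun z hz h => (hupper z hz h).2) (fun z hz h => (hlower z hz h).2)⟩

/-- **Characterization of slice constant functions**: `g` is slice constant iff
there are `q₊, q₋ ∈ ℍ` with `g (α + Iβ) = (1 + I·J)q₊ + (1 - I·J)q₋` on `Ω_D`
(`β > 0`, `I ∈ 𝕊`), for a fixed `J ∈ 𝕊`. -/
theorem slice_constant_characterization
    (D : Set ℂ) (hDopen : IsOpen D)
    (hDsymm : ∀ z ∈ D, (starRingEnd ℂ) z ∈ D)
    (hDreal : ∀ z ∈ D, z.im ≠ 0)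
    (hDplus : IsConnected (D ∩ {z : ℂ | 0 < z.im}))
    (J : Quaternion ℝ) (hJ : J ^ 2 = -1)
    (F₁ F₂ : ℂ → Quaternion ℝ)
    (hstem : ∀ z ∈ D,
      F₁ ((starRingEnd ℂ) z) = F₁ z ∧ F₂ ((starRingEnd ℂ) z) = - F₂ z)
    (g : Quaternion ℝ → Quaternion ℝ)
    (hslice : ∀ z ∈ D, ∀ I : Quaternion ℝ, I ^ 2 = -1 →
      g ((z.re : Quaternion ℝ) + I * (z.im : Quaternion ℝ)) = F₁ z + I * F₂ z) :
    ((∀ z ∈ D, ∃ U : Set ℂ, IsOpen U ∧ z ∈ U ∧ ∀ w ∈ U ∩ D, F₁ w = F₁ z) ∧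
     (∀ z ∈ D, ∃ U : Set ℂ, IsOpen U ∧ z ∈ U ∧ ∀ w ∈ U ∩ D, F₂ w = F₂ z))
    ↔
    (∃ qp qm : Quaternion ℝ, ∀ z ∈ D, 0 < z.im → ∀ I : Quaternion ℝ, I ^ 2 = -1 →
      g ((z.re : Quaternion ℝ) + I * (z.im : Quaternion ℝ))
        = (1 + I * J) * qp + (1 - I * J) * qm) :=
  slice_constant_characterization_general D hDsymm hDreal hDplus J hJ F₁ F₂ hstem g hslice
end

section
/- Characterization of slice affine functions: assume D ∩ ℝ = ∅ and D⁺ = D ∩ {z : Im z > 0} is nonempty and connected. Fix J ∈ 𝕊. A slice regular function f : Ω_D → ℍ is slice affine (i.e. its slice derivative ∂f/∂x is slice constant) if and only if there exist quaternions p₊, p₋, r₊, r₋ ∈ ℍ such that f(α + Iβ) = (α + Iβ)·(1 + I·J)·p₊ + (α + Iβ)·(1 − I·J)·p₋ + (1 + I·J)·r₊ + (1 − I·J)·r₋ for all α + iβ ∈ D with β > 0 and all I ∈ 𝕊. -/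
set_option maxHeartbeats 1000000

/- Identify ℍ with `Quaternion ℝ`.  A slice regular function on the
circularization of a conjugation-symmetric open set `D ⊆ ℂ` (with `D ∩ ℝ = ∅`,
`D⁺ = D ∩ {Im > 0}` nonempty connected) is induced by a stem function `(F₁, F₂)`
whose components satisfy the Cauchy-Riemann system.  Its slice derivative is the
slice function induced by `(∂F₁/∂α, ∂F₂/∂α)`; `f` is slice affine when these
partial derivatives are locally constant on `D`. -/

private lemma locConst {α : Type*} {s : Set ℂ} (hs : IsPreconnected s) {g : ℂ → α}
    (h : ∀ z ∈ s, ∃ U : Set ℂ, IsOpen U ∧ z ∈ U ∧ ∀ w ∈ U ∩ s, g w = g z)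
    {x y : ℂ} (hx : x ∈ s) (hy : y ∈ s) : g x = g y := by
  classical
  by_contra hne
  choose U hUo hUm hUc using h
  set u := ⋃ z : {z : ℂ // z ∈ s ∧ g z = g x}, U z z.2.1 with hu_def
  set v := ⋃ z : {z : ℂ // z ∈ s ∧ g z ≠ g x}, U z z.2.1 with hv_def
  have hu : IsOpen u := isOpen_iUnion fun z => hUo _ z.2.1
  have hv : IsOpen v := isOpen_iUnion fun z => hUo _ z.2.1
  have hcov : s ⊆ u ∪ v := by
    intro z hz
    by_cases hgz : g z = g x
    · exact Or.inl (Set.mem_iUnion.2 ⟨⟨z, hz, hgz⟩, hUm z hz⟩)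
    · exact Or.inr (Set.mem_iUnion.2 ⟨⟨z, hz, hgz⟩, hUm z hz⟩)
  obtain ⟨w, hws, hwu, hwv⟩ :=
    hs u v hu hv hcov ⟨x, hx, Set.mem_iUnion.2 ⟨⟨x, hx, rfl⟩, hUm x hx⟩⟩
      ⟨y, hy, Set.mem_iUnion.2 ⟨⟨y, hy, fun h => hne h.symm⟩, hUm y hy⟩⟩
  obtain ⟨z₁, hz₁⟩ := Set.mem_iUnion.1 hwu
  obtain ⟨z₂, hz₂⟩ := Set.mem_iUnion.1 hwv
  have e1 := hUc z₁ z₁.2.1 w ⟨hz₁, hws⟩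
  have e2 := hUc z₂ z₂.2.1 w ⟨hz₂, hws⟩
  exact z₂.2.2 (by rw [← e2, e1, z₁.2.2])

private lemma affineOn {s : Set ℂ} (ho : IsOpen s) (hs : IsPreconnected s)
    {G : ℂ → Quaternion ℝ} {L : ℂ →L[ℝ] Quaternion ℝ}
    (h : ∀ z ∈ s, HasFDerivAt G L z) {x y : ℂ} (hx : x ∈ s) (hy : y ∈ s) :
    G x - L x = G y - L y := by
  have key : ∀ z ∈ s, ∃ U : Set ℂ, IsOpen U ∧ z ∈ U ∧
      ∀ w ∈ U ∩ s, (fun z => G z - L z) w = (fun z => G z - L z) z := by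
    intro z hz
    obtain ⟨ε, hε, hball⟩ := Metric.isOpen_iff.1 ho z hz
    refine ⟨Metric.ball z ε, Metric.isOpen_ball, Metric.mem_ball_self hε, ?_⟩
    intro w hw
    have hder : ∀ p ∈ Metric.ball z ε, HasFDerivAt (fun z => G z - L z) (0 : ℂ →L[ℝ] Quaternion ℝ) p := by
      intro p hp
      have := (h p (hball hp)).sub (L.hasFDerivAt (x := p))
      rwa [sub_self] at this
    refine (convex_ball z ε).is_const_of_fderivWithin_eq_zero (𝕜 := ℝ)
      (fun p hp => (hder p hp).differentiableAt.differentiableWithinAt) ?_ hw.1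
      (Metric.mem_ball_self hε)
    intro p hp
    exact ((hder p hp).hasFDerivWithinAt).fderivWithin
      (Metric.isOpen_ball.uniqueDiffWithinAt hp)
  exact locConst hs key hx hy

private lemma clm_apply_decomp (T : ℂ →L[ℝ] Quaternion ℝ) (w : ℂ) :
    T w = w.re • T 1 + w.im • T Complex.I := by
  have hw : w = w.re • (1 : ℂ) + w.im • Complex.I := by
    rw [Complex.real_smul, Complex.real_smul, mul_one, Complex.re_add_im]
  conv_lhs => rw [hw]
  rw [map_add, map_smul, map_smul]

private lemma coe_add_mul_eq (I : Quaternion ℝ) (α β : ℝ) :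
    ((α : Quaternion ℝ) + I * (β : Quaternion ℝ)) = α • (1 : Quaternion ℝ) + β • I := by
  have h1 : (α : Quaternion ℝ) = α • (1 : Quaternion ℝ) := by
    rw [← Quaternion.coe_mul_eq_smul, mul_one]
  rw [Quaternion.mul_coe_eq_smul, h1]

private lemma key_alg (I J A B c₁ c₂ : Quaternion ℝ) (α β : ℝ)
    (hI : I * I = -1) (hJ : J * J = -1) :
    (α • (1:Quaternion ℝ) + β • I) * (1 + I * J) * (((1:ℝ)/2) • (A - J * B))
      + (α • (1:Quaternion ℝ) + β • I) * (1 - I * J) * (((1:ℝ)/2) • (A + J * B))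
      + (1 + I * J) * (((1:ℝ)/2) • (c₁ - J * c₂))
      + (1 - I * J) * (((1:ℝ)/2) • (c₁ + J * c₂))
    = (α • A + β • (-B) + c₁) + I * (α • B + β • A + c₂) := by
  have hI' : ∀ x : Quaternion ℝ, I * (I * x) = -x := fun x => by
    rw [← mul_assoc, hI, neg_one_mul]
  have hJ' : ∀ x : Quaternion ℝ, J * (J * x) = -x := fun x => by
    rw [← mul_assoc, hJ, neg_one_mul]
  simp only [mul_add, add_mul, sub_mul, mul_sub, smul_mul_assoc, mul_smul_comm, one_mul,
    mul_one, smul_add, smul_sub, mul_assoc, hI', hJ', smul_neg, mul_neg, neg_neg, neg_add,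
    neg_sub, smul_smul, neg_smul, neg_mul]
  match_scalars <;> ring

private lemma key_alg2 (J pp pm rp rm x y : Quaternion ℝ) (α β : ℝ) (hJ : J * J = -1)
    (e1 : x + J * y
      = (α • 1 + β • J) * (1 + J * J) * pp + (α • 1 + β • J) * (1 - J * J) * pm
        + (1 + J * J) * rp + (1 - J * J) * rm)
    (e2 : x + (-J) * y
      = (α • 1 + β • (-J)) * (1 + (-J) * J) * pp + (α • 1 + β • (-J)) * (1 - (-J) * J) * pm
        + (1 + (-J) * J) * rp + (1 - (-J) * J) * rm) :
    x = α • (pp + pm) + β • (J * (pm - pp)) + (rp + rm)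
      ∧ y = α • (J * (pp - pm)) + β • (pp + pm) + J * (rp - rm) := by
  have hJ' : ∀ t : Quaternion ℝ, J * (J * t) = -t := fun t => by
    rw [← mul_assoc, hJ, neg_one_mul]
  rw [neg_mul] at e2
  constructor
  · have ex : x = ((1:ℝ)/2) • ((x + J * y) + (x + -(J * y))) := by module
    rw [e1, e2] at ex
    rw [ex]
    simp only [mul_add, add_mul, sub_mul, mul_sub, smul_mul_assoc, mul_smul_comm, one_mul,
      mul_one, smul_add, smul_sub, mul_assoc, hJ', smul_neg, mul_neg, neg_neg, neg_add,
      neg_sub, smul_smul, neg_smul, neg_mul]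
    match_scalars <;> ring
  · have ey : J * y = ((1:ℝ)/2) • ((x + J * y) - (x + -(J * y))) := by module
    rw [e1, e2] at ey
    have ey2 : y = -(J * (J * y)) := by rw [hJ' y, neg_neg]
    rw [ey] at ey2
    rw [ey2]
    simp only [mul_add, add_mul, sub_mul, mul_sub, smul_mul_assoc, mul_smul_comm, one_mul,
      mul_one, smul_add, smul_sub, mul_assoc, hJ', smul_neg, mul_neg, neg_neg, neg_add,
      neg_sub, smul_smul, neg_smul, neg_mul]
    match_scalars <;> ring

private lemma fderiv_on_graph {s : Set ℂ} (ho : IsOpen s) {F : ℂ → Quaternion ℝ}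
    {P Q R : Quaternion ℝ}
    (h : ∀ w ∈ s, F w = w.re • P + w.im • Q + R) {z : ℂ} (hz : z ∈ s) :
    fderiv ℝ F z 1 = P := by
  set M : ℂ →L[ℝ] Quaternion ℝ :=
    Complex.reCLM.smulRight P + Complex.imCLM.smulRight Q with hM_def
  have hM : HasFDerivAt (fun w : ℂ => w.re • P + w.im • Q + R) M z := by
    have := (M.hasFDerivAt (x := z)).add_const R
    simpa only [hM_def, ContinuousLinearMap.add_apply, ContinuousLinearMap.smulRight_apply,
      Complex.reCLM_apply, Complex.imCLM_apply] using this
  have heq : F =ᶠ[nhds z] (fun w : ℂ => w.re • P + w.im • Q + R) :=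
    Filter.eventuallyEq_of_mem (ho.mem_nhds hz) h
  rw [heq.fderiv_eq, hM.fderiv]
  simp [hM_def]

/-- **Characterization of slice affine functions**: `f` is slice affine iff there
are `p₊, p₋, r₊, r₋ ∈ ℍ` with
`f (α + Iβ) = (α + Iβ)(1 + I·J)p₊ + (α + Iβ)(1 - I·J)p₋ + (1 + I·J)r₊ + (1 - I·J)r₋`
on `Ω_D` (`β > 0`, `I ∈ 𝕊`), for a fixed `J ∈ 𝕊`. -/
theorem slice_affine_characterization
    (D : Set ℂ) (hDopen : IsOpen D)
    (hDsymm : ∀ z ∈ D, (starRingEnd ℂ) z ∈ D)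
    (hDreal : ∀ z ∈ D, z.im ≠ 0)
    (hDplus : IsConnected (D ∩ {z : ℂ | 0 < z.im}))
    (J : Quaternion ℝ) (hJ : J ^ 2 = -1)
    (F₁ F₂ : ℂ → Quaternion ℝ)
    (hstem : ∀ z ∈ D,
      F₁ ((starRingEnd ℂ) z) = F₁ z ∧ F₂ ((starRingEnd ℂ) z) = - F₂ z)
    (f : Quaternion ℝ → Quaternion ℝ)
    (hslice : ∀ z ∈ D, ∀ I : Quaternion ℝ, I ^ 2 = -1 →
      f ((z.re : Quaternion ℝ) + I * (z.im : Quaternion ℝ)) = F₁ z + I * F₂ z)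
    (hreg : ∀ z ∈ D, ∃ D₁ D₂ : ℂ →L[ℝ] Quaternion ℝ,
      HasFDerivAt F₁ D₁ z ∧ HasFDerivAt F₂ D₂ z ∧
      D₁ 1 = D₂ Complex.I ∧ D₁ Complex.I = - D₂ 1) :
    ((∀ z ∈ D, ∃ U : Set ℂ, IsOpen U ∧ z ∈ U ∧
        ∀ w ∈ U ∩ D, fderiv ℝ F₁ w 1 = fderiv ℝ F₁ z 1) ∧
     (∀ z ∈ D, ∃ U : Set ℂ, IsOpen U ∧ z ∈ U ∧
        ∀ w ∈ U ∩ D, fderiv ℝ F₂ w 1 = fderiv ℝ F₂ z 1))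
    ↔
    (∃ pp pm rp rm : Quaternion ℝ, ∀ z ∈ D, 0 < z.im → ∀ I : Quaternion ℝ, I ^ 2 = -1 →
      f ((z.re : Quaternion ℝ) + I * (z.im : Quaternion ℝ))
        = ((z.re : Quaternion ℝ) + I * (z.im : Quaternion ℝ)) * (1 + I * J) * pp
          + ((z.re : Quaternion ℝ) + I * (z.im : Quaternion ℝ)) * (1 - I * J) * pm
          + (1 + I * J) * rp + (1 - I * J) * rm) := by
  have hJ2 : J * J = -1 := by rw [← sq]; exact hJ
  set Dp : Set ℂ := D ∩ {z : ℂ | 0 < z.im} with hDp_def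
  have hDpOpen : IsOpen Dp := hDopen.inter (isOpen_lt continuous_const Complex.continuous_im)
  have hDpConn : IsPreconnected Dp := hDplus.isPreconnected
  obtain ⟨z₀, hz₀⟩ := hDplus.nonempty
  constructor
  · rintro ⟨h1, h2⟩
    set A : Quaternion ℝ := fderiv ℝ F₁ z₀ 1 with hA_def
    set B : Quaternion ℝ := fderiv ℝ F₂ z₀ 1 with hB_def
    have hA : ∀ z ∈ Dp, fderiv ℝ F₁ z 1 = A := by
      intro z hz
      refine locConst hDpConn (g := fun z => fderiv ℝ F₁ z 1) ?_ hz hz₀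
      intro w hw
      obtain ⟨U, hUo, hUm, hUc⟩ := h1 w hw.1
      exact ⟨U, hUo, hUm, fun v hv => hUc v ⟨hv.1, hv.2.1⟩⟩
    have hB : ∀ z ∈ Dp, fderiv ℝ F₂ z 1 = B := by
      intro z hz
      refine locConst hDpConn (g := fun z => fderiv ℝ F₂ z 1) ?_ hz hz₀
      intro w hw
      obtain ⟨U, hUo, hUm, hUc⟩ := h2 w hw.1
      exact ⟨U, hUo, hUm, fun v hv => hUc v ⟨hv.1, hv.2.1⟩⟩
    set L₁ : ℂ →L[ℝ] Quaternion ℝ :=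
      Complex.reCLM.smulRight A + Complex.imCLM.smulRight (-B) with hL₁_def
    set L₂ : ℂ →L[ℝ] Quaternion ℝ :=
      Complex.reCLM.smulRight B + Complex.imCLM.smulRight A with hL₂_def
    have hL₁app : ∀ w : ℂ, L₁ w = w.re • A + w.im • (-B) := by
      intro w
      simp [hL₁_def]
    have hL₂app : ∀ w : ℂ, L₂ w = w.re • B + w.im • A := by
      intro w
      simp [hL₂_def]
    have hF₁der : ∀ z ∈ Dp, HasFDerivAt F₁ L₁ z := by
      intro z hz
      obtain ⟨D₁, D₂, hD₁, hD₂, hcr1, hcr2⟩ := hreg z hz.1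
      have e1 : D₁ 1 = A := by rw [← hD₁.fderiv]; exact hA z hz
      have e2 : D₂ 1 = B := by rw [← hD₂.fderiv]; exact hB z hz
      have hDL : D₁ = L₁ := by
        apply ContinuousLinearMap.ext
        intro w
        rw [clm_apply_decomp D₁ w, e1, hcr2, e2, hL₁app]
      rwa [hDL] at hD₁
    have hF₂der : ∀ z ∈ Dp, HasFDerivAt F₂ L₂ z := by
      intro z hz
      obtain ⟨D₁, D₂, hD₁, hD₂, hcr1, hcr2⟩ := hreg z hz.1
      have e1 : D₁ 1 = A := by rw [← hD₁.fderiv]; exact hA z hz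
      have e2 : D₂ 1 = B := by rw [← hD₂.fderiv]; exact hB z hz
      have hDL : D₂ = L₂ := by
        apply ContinuousLinearMap.ext
        intro w
        rw [clm_apply_decomp D₂ w, e2, ← hcr1, e1, hL₂app]
      rwa [hDL] at hD₂
    set c₁ : Quaternion ℝ := F₁ z₀ - L₁ z₀ with hc₁_def
    set c₂ : Quaternion ℝ := F₂ z₀ - L₂ z₀ with hc₂_def
    have hF₁ : ∀ z ∈ Dp, F₁ z = z.re • A + z.im • (-B) + c₁ := by
      intro z hz
      have h := affineOn hDpOpen hDpConn hF₁der hz hz₀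
      rw [sub_eq_iff_eq_add] at h
      rw [h, hc₁_def]
      simp only [hL₁app]
      abel
    have hF₂ : ∀ z ∈ Dp, F₂ z = z.re • B + z.im • A + c₂ := by
      intro z hz
      have h := affineOn hDpOpen hDpConn hF₂der hz hz₀
      rw [sub_eq_iff_eq_add] at h
      rw [h, hc₂_def]
      simp only [hL₂app]
      abel
    refine ⟨((1:ℝ)/2) • (A - J * B), ((1:ℝ)/2) • (A + J * B),
        ((1:ℝ)/2) • (c₁ - J * c₂), ((1:ℝ)/2) • (c₁ + J * c₂), ?_⟩
    intro z hzD him I hI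
    have hI2 : I * I = -1 := by rw [← sq]; exact hI
    have hzp : z ∈ Dp := ⟨hzD, him⟩
    rw [hslice z hzD I hI, hF₁ z hzp, hF₂ z hzp, coe_add_mul_eq]
    exact (key_alg I J A B c₁ c₂ z.re z.im hI2 hJ2).symm
  · rintro ⟨pp, pm, rp, rm, hf⟩
    have hnJ : (-J) ^ 2 = -1 := by rw [neg_sq]; exact hJ
    set P : Quaternion ℝ := pp + pm with hP_def
    set Q : Quaternion ℝ := J * (pm - pp) with hQ_def
    set S : Quaternion ℝ := J * (pp - pm) with hS_def
    set R : Quaternion ℝ := rp + rm with hR_def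
    set T : Quaternion ℝ := J * (rp - rm) with hT_def
    have hstems : ∀ z ∈ Dp, F₁ z = z.re • P + z.im • Q + R
        ∧ F₂ z = z.re • S + z.im • P + T := by
      intro z hz
      have e1 := (hslice z hz.1 J hJ).symm.trans (hf z hz.1 hz.2 J hJ)
      have e2 := (hslice z hz.1 (-J) hnJ).symm.trans (hf z hz.1 hz.2 (-J) hnJ)
      rw [coe_add_mul_eq] at e1 e2
      exact key_alg2 J pp pm rp rm (F₁ z) (F₂ z) z.re z.im hJ2 e1 e2
    have hconjDp : ∀ w ∈ D, w.im < 0 → (starRingEnd ℂ) w ∈ Dp := by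
      intro w hw him
      refine ⟨hDsymm w hw, ?_⟩
      simp only [Set.mem_setOf_eq, Complex.conj_im]
      linarith
    set Dm : Set ℂ := D ∩ {z : ℂ | z.im < 0} with hDm_def
    have hDmOpen : IsOpen Dm := hDopen.inter (isOpen_lt Complex.continuous_im continuous_const)
    have hF₁m : ∀ w ∈ Dm, F₁ w = w.re • P + w.im • (-Q) + R := by
      intro w hw
      have hcw := hconjDp w hw.1 hw.2
      have h := (hstem w hw.1).1
      rw [← h, (hstems _ hcw).1, Complex.conj_re, Complex.conj_im]
      module
    have hF₂m : ∀ w ∈ Dm, F₂ w = w.re • (-S) + w.im • P + (-T) := by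
      intro w hw
      have hcw := hconjDp w hw.1 hw.2
      have h := (hstem w hw.1).2
      have h' : F₂ w = - F₂ ((starRingEnd ℂ) w) := by rw [h, neg_neg]
      rw [h', (hstems _ hcw).2, Complex.conj_re, Complex.conj_im]
      module
    constructor
    · intro z hz
      have hall : ∀ w ∈ D, fderiv ℝ F₁ w 1 = P := by
        intro w hw
        rcases (hDreal w hw).lt_or_gt with hneg | hpos
        · exact fderiv_on_graph hDmOpen hF₁m ⟨hw, hneg⟩
        · exact fderiv_on_graph hDpOpen (fun v hv => (hstems v hv).1) ⟨hw, hpos⟩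
      exact ⟨Set.univ, isOpen_univ, Set.mem_univ z,
        fun w hw => by rw [hall w hw.2, hall z hz]⟩
    · intro z hz
      rcases (hDreal z hz).lt_or_gt with hneg | hpos
      · refine ⟨{w : ℂ | w.im < 0}, isOpen_lt Complex.continuous_im continuous_const,
          hneg, ?_⟩
        intro w hw
        rw [fderiv_on_graph hDmOpen hF₂m ⟨hw.2, hw.1⟩,
          fderiv_on_graph hDmOpen hF₂m ⟨hz, hneg⟩]
      · refine ⟨{w : ℂ | 0 < w.im}, isOpen_lt continuous_const Complex.continuous_im,
          hpos, ?_⟩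
        intro w hw
        rw [fderiv_on_graph hDpOpen (fun v hv => (hstems v hv).2) ⟨hw.2, hw.1⟩,
          fderiv_on_graph hDpOpen (fun v hv => (hstems v hv).2) ⟨hz, hpos⟩]
end

section
/- Extension of slice affine functions to the reals: fix J ∈ 𝕊 and quaternions p₊, p₋, r₊, r₋ ∈ ℍ, and define f : ℍ∖ℝ → ℍ by f(α + Iβ) = (α + Iβ)·(1 + I·J)·p₊ + (α + Iβ)·(1 − I·J)·p₋ + (1 + I·J)·r₊ + (1 − I·J)·r₋ for α ∈ ℝ, β > 0, I ∈ 𝕊. Then for every α ∈ ℝ and every I ∈ 𝕊 the one-sided limits lim_{β→0⁺} f(α + Iβ) and lim_{β→0⁺} f(α − Iβ) coincide if and only if p₊ = p₋ and r₊ = r₋, in which case f(x) = x·a + b for a = 2p₊ and b = 2r₊. -/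
open Filter Topology

private lemma quat_tendsto_aux (α : ℝ) (I : Quaternion ℝ) (c d : Quaternion ℝ) :
    Tendsto (fun β : ℝ => ((α : Quaternion ℝ) + I * (β : Quaternion ℝ)) * c + d)
      (𝓝[>] (0:ℝ)) (𝓝 ((α : Quaternion ℝ) * c + d)) := by
  have hc : Continuous (fun β : ℝ => ((α : Quaternion ℝ) + I * (β : Quaternion ℝ)) * c + d) :=
    (((continuous_const.add (continuous_const.mul Quaternion.continuous_coe)).mul
      continuous_const).add continuous_const)
  have h : Tendsto _ (𝓝[>] (0:ℝ)) _ := (hc.tendsto 0).mono_left nhdsWithin_le_nhds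
  simpa using h

/- Identify ℍ with `Quaternion ℝ`; every nonreal quaternion is `α + Iβ` with
`β > 0`, `I² = -1`.  Fix `J ∈ 𝕊` and `p₊, p₋, r₊, r₋ ∈ ℍ`, and let
`f (α + Iβ) = (α + Iβ)(1 + I·J)p₊ + (α + Iβ)(1 - I·J)p₋ + (1 + I·J)r₊ + (1 - I·J)r₋`. -/

/-- **Extension of slice affine functions to the reals**:  the one-sided limits
`lim_{β→0⁺} f (α + Iβ)` and `lim_{β→0⁺} f (α - Iβ)` coincide (for all `α ∈ ℝ`,
`I ∈ 𝕊`) iff `p₊ = p₋` and `r₊ = r₋`, in which case `f x = x·(2p₊) + 2r₊`. -/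
theorem slice_affine_extension_to_reals
    (J : Quaternion ℝ) (hJ : J ^ 2 = -1)
    (pp pm rp rm : Quaternion ℝ)
    (f : Quaternion ℝ → Quaternion ℝ)
    (hf : ∀ (α β : ℝ), 0 < β → ∀ I : Quaternion ℝ, I ^ 2 = -1 →
      f ((α : Quaternion ℝ) + I * (β : Quaternion ℝ))
        = ((α : Quaternion ℝ) + I * (β : Quaternion ℝ)) * (1 + I * J) * pp
          + ((α : Quaternion ℝ) + I * (β : Quaternion ℝ)) * (1 - I * J) * pm
          + (1 + I * J) * rp + (1 - I * J) * rm) :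
    ((∀ (α : ℝ) (I : Quaternion ℝ), I ^ 2 = -1 →
        ∃ L : Quaternion ℝ,
          Tendsto (fun β : ℝ => f ((α : Quaternion ℝ) + I * (β : Quaternion ℝ)))
            (𝓝[>] (0 : ℝ)) (𝓝 L) ∧
          Tendsto (fun β : ℝ => f ((α : Quaternion ℝ) - I * (β : Quaternion ℝ)))
            (𝓝[>] (0 : ℝ)) (𝓝 L))
      ↔ (pp = pm ∧ rp = rm))
    ∧
    (pp = pm → rp = rm →
      ∀ (α β : ℝ), 0 < β → ∀ I : Quaternion ℝ, I ^ 2 = -1 →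
        f ((α : Quaternion ℝ) + I * (β : Quaternion ℝ))
          = ((α : Quaternion ℝ) + I * (β : Quaternion ℝ)) * (2 * pp) + 2 * rp) := by
  have hJJ : J * J = -1 := by rw [← sq]; exact hJ
  have two_ne : (2 : Quaternion ℝ) ≠ 0 := by
    have h2 : ((2:ℝ) : Quaternion ℝ) = 2 := by
      rw [show (2:ℝ) = 1 + 1 by norm_num, Quaternion.coe_add, Quaternion.coe_one]; norm_num
    rw [← h2, ← Quaternion.coe_zero, Ne, Quaternion.coe_inj]
    norm_num
  -- second part
  have hsecond : pp = pm → rp = rm →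
      ∀ (α β : ℝ), 0 < β → ∀ I : Quaternion ℝ, I ^ 2 = -1 →
        f ((α : Quaternion ℝ) + I * (β : Quaternion ℝ))
          = ((α : Quaternion ℝ) + I * (β : Quaternion ℝ)) * (2 * pp) + 2 * rp := by
    intro hp hr α β hβ I hI
    rw [hf α β hβ I hI, ← hp, ← hr]
    noncomm_ring
  refine ⟨⟨?_, ?_⟩, hsecond⟩
  · -- forward: take I = J
    intro h
    have key : ∀ α : ℝ, (α : Quaternion ℝ) * (2 * pm) + 2 * rm
        = (α : Quaternion ℝ) * (2 * pp) + 2 * rp := by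
      intro α
      obtain ⟨L, h1, h2⟩ := h α J hJ
      have e1 : (fun β : ℝ => f ((α : Quaternion ℝ) + J * (β : Quaternion ℝ)))
          =ᶠ[𝓝[>] (0:ℝ)] fun β : ℝ =>
            ((α : Quaternion ℝ) + J * (β : Quaternion ℝ)) * (2 * pm) + 2 * rm := by
        filter_upwards [self_mem_nhdsWithin] with β hβ
        rw [hf α β hβ J hJ]
        rw [show (1 : Quaternion ℝ) + J * J = 0 by rw [hJJ]; norm_num,
            show (1 : Quaternion ℝ) - J * J = 2 by rw [hJJ]; norm_num]
        noncomm_ring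
      have hmJ : (-J) ^ 2 = (-1 : Quaternion ℝ) := by rw [neg_sq]; exact hJ
      have e2 : (fun β : ℝ => f ((α : Quaternion ℝ) - J * (β : Quaternion ℝ)))
          =ᶠ[𝓝[>] (0:ℝ)] fun β : ℝ =>
            ((α : Quaternion ℝ) - J * (β : Quaternion ℝ)) * (2 * pp) + 2 * rp := by
        filter_upwards [self_mem_nhdsWithin] with β hβ
        have : (α : Quaternion ℝ) - J * (β : Quaternion ℝ)
            = (α : Quaternion ℝ) + (-J) * (β : Quaternion ℝ) := by rw [sub_eq_add_neg, neg_mul]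
        rw [this, hf α β hβ (-J) hmJ]
        rw [show (1 : Quaternion ℝ) + (-J) * J = 2 by rw [neg_mul, hJJ]; norm_num,
            show (1 : Quaternion ℝ) - (-J) * J = 0 by rw [neg_mul, hJJ]; norm_num]
        noncomm_ring
      have t1 : Tendsto (fun β : ℝ =>
            ((α : Quaternion ℝ) + J * (β : Quaternion ℝ)) * (2 * pm) + 2 * rm)
          (𝓝[>] (0:ℝ)) (𝓝 ((α : Quaternion ℝ) * (2 * pm) + 2 * rm)) :=
        quat_tendsto_aux α J _ _
      have t2 : Tendsto (fun β : ℝ =>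
            ((α : Quaternion ℝ) - J * (β : Quaternion ℝ)) * (2 * pp) + 2 * rp)
          (𝓝[>] (0:ℝ)) (𝓝 ((α : Quaternion ℝ) * (2 * pp) + 2 * rp)) := by
        have := quat_tendsto_aux α (-J) (2 * pp) (2 * rp)
        refine this.congr fun β => ?_
        rw [neg_mul, ← sub_eq_add_neg]
      have hL1 : L = (α : Quaternion ℝ) * (2 * pm) + 2 * rm :=
        tendsto_nhds_unique (h1.congr' e1) t1
      have hL2 : L = (α : Quaternion ℝ) * (2 * pp) + 2 * rp :=
        tendsto_nhds_unique (h2.congr' e2) t2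
      rw [← hL1, hL2]
    have hr : rp = rm := by
      have := key 0
      simp only [Quaternion.coe_zero, zero_mul, zero_add] at this
      exact (mul_left_cancel₀ two_ne this).symm
    have hp : pp = pm := by
      have h1 := key 1
      rw [hr] at h1
      simp only [Quaternion.coe_one, one_mul, add_left_inj] at h1
      exact (mul_left_cancel₀ two_ne h1).symm
    exact ⟨hp, hr⟩
  · -- backward
    rintro ⟨hp, hr⟩ α I hI
    refine ⟨(α : Quaternion ℝ) * (2 * pp) + 2 * rp, ?_, ?_⟩
    · have e : (fun β : ℝ => f ((α : Quaternion ℝ) + I * (β : Quaternion ℝ)))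
          =ᶠ[𝓝[>] (0:ℝ)] fun β : ℝ =>
            ((α : Quaternion ℝ) + I * (β : Quaternion ℝ)) * (2 * pp) + 2 * rp := by
        filter_upwards [self_mem_nhdsWithin] with β hβ
        exact hsecond hp hr α β hβ I hI
      exact (quat_tendsto_aux α I _ _).congr' e.symm
    · have hmI : (-I) ^ 2 = (-1 : Quaternion ℝ) := by rw [neg_sq]; exact hI
      have e : (fun β : ℝ => f ((α : Quaternion ℝ) - I * (β : Quaternion ℝ)))
          =ᶠ[𝓝[>] (0:ℝ)] fun β : ℝ =>
            ((α : Quaternion ℝ) + (-I) * (β : Quaternion ℝ)) * (2 * pp) + 2 * rp := by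
        filter_upwards [self_mem_nhdsWithin] with β hβ
        have : (α : Quaternion ℝ) - I * (β : Quaternion ℝ)
            = (α : Quaternion ℝ) + (-I) * (β : Quaternion ℝ) := by rw [sub_eq_add_neg, neg_mul]
        rw [this]
        exact hsecond hp hr α β hβ (-I) hmI
      exact (quat_tendsto_aux α (-I) _ _).congr' e.symm
end

section
/- The real differential of a slice regular function commutes with left multiplication by the imaginary unit of the point: let f : Ω_D → ℍ be slice regular with continuously differentiable stem components, and let x = α + Iβ ∈ Ω_D with β > 0, I ∈ 𝕊. Then for every v ∈ ℍ, the real Fréchet derivative of f at x satisfies (df)_x(I·v) = I·((df)_x(v)). Consequently, when (df)_x is invertible, the push-forward complex structure J^f = (df)∘J∘(df)⁻¹ acts at f(x) as left multiplication by I. -/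
/- Identify ℍ with `Quaternion ℝ`.  A slice regular function on the
circularization of a conjugation-symmetric open set `D ⊆ ℂ` is induced by a stem
function `(F₁, F₂)` with continuously differentiable components satisfying the
Cauchy-Riemann system. -/

open scoped RealInnerProductSpace
open Quaternion

noncomputable def qre : Quaternion ℝ →L[ℝ] ℝ :=
  ⟨{ toFun := QuaternionAlgebra.re, map_add' := fun _ _ => rfl, map_smul' := fun _ _ => rfl },
    Quaternion.continuous_re⟩

noncomputable def qim : Quaternion ℝ →L[ℝ] Quaternion ℝ :=
  ⟨{ toFun := Quaternion.im,
     map_add' := fun a b => by ext <;> simp,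
     map_smul' := fun r a => by ext <;> simp },
    Quaternion.continuous_im⟩

@[simp] lemma qre_apply (y : Quaternion ℝ) : qre y = y.re := rfl
@[simp] lemma qim_apply (y : Quaternion ℝ) : qim y = y.im := rfl

example : ⇑Complex.ofRealCLM = Complex.ofReal := rfl

lemma I_re {I : Quaternion ℝ} (hI : I ^ 2 = -1) : I.re = 0 := by
  have h := hI
  rw [pow_two] at h
  have h1 : (I * I).re = (-1 : Quaternion ℝ).re := by rw [h]
  have h2 : (I * I).imI = (-1 : Quaternion ℝ).imI := by rw [h]
  have h3 : (I * I).imJ = (-1 : Quaternion ℝ).imJ := by rw [h]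
  have h4 : (I * I).imK = (-1 : Quaternion ℝ).imK := by rw [h]
  simp [Quaternion.re_mul, Quaternion.imI_mul, Quaternion.imJ_mul, Quaternion.imK_mul] at h1 h2 h3 h4
  by_contra hre
  have hi : I.imI = 0 := by
    have h' : I.re * I.imI = 0 := by linarith
    rcases mul_eq_zero.1 h' with h | h
    · exact absurd h hre
    · exact h
  have hj : I.imJ = 0 := by
    have h' : I.re * I.imJ = 0 := by linarith
    rcases mul_eq_zero.1 h' with h | h
    · exact absurd h hre
    · exact h
  have hk : I.imK = 0 := by
    have h' : I.re * I.imK = 0 := by linarith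
    rcases mul_eq_zero.1 h' with h | h
    · exact absurd h hre
    · exact h
  rw [hi, hj, hk] at h1
  nlinarith [sq_nonneg I.re]

lemma I_normsq {I : Quaternion ℝ} (hI : I ^ 2 = -1) :
    I.imI * I.imI + I.imJ * I.imJ + I.imK * I.imK = 1 := by
  have hre := I_re hI
  rw [pow_two] at hI
  have h1 : (I * I).re = (-1 : Quaternion ℝ).re := by rw [hI]
  simp [Quaternion.re_mul, hre] at h1
  linarith

lemma norm_I {I : Quaternion ℝ} (hI : I ^ 2 = -1) : ‖I‖ = 1 := by
  have h1 : Quaternion.normSq I = 1 := by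
    have := I_normsq hI
    rw [Quaternion.normSq_def']
    have hre := I_re hI
    nlinarith
  have h2 : ‖I‖ * ‖I‖ = 1 := by rw [← Quaternion.normSq_eq_norm_mul_self, h1]
  nlinarith [norm_nonneg I]

lemma inner_I_im (I v : Quaternion ℝ) :
    ⟪I, v.im⟫ = I.imI * v.imI + I.imJ * v.imJ + I.imK * v.imK := by
  rw [Quaternion.inner_def]
  simp [Quaternion.re_mul]
  ring

lemma key1 {I : Quaternion ℝ} (hI : I ^ 2 = -1) (v : Quaternion ℝ) :
    (I * v).re = -(I.imI * v.imI + I.imJ * v.imJ + I.imK * v.imK) := by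
  have hre := I_re hI
  simp [Quaternion.re_mul, hre]
  ring

lemma key2 {I : Quaternion ℝ} (hI : I ^ 2 = -1) (v : Quaternion ℝ) :
    ⟪I, (I * v).im⟫ = v.re := by
  have hre := I_re hI
  have hn := I_normsq hI
  rw [inner_I_im]
  simp [Quaternion.imI_mul, Quaternion.imJ_mul, Quaternion.imK_mul, hre]
  linear_combination v.re * hn

lemma key3 {I : Quaternion ℝ} (hI : I ^ 2 = -1) (v : Quaternion ℝ) :
    (I * v).im = v.re • I + I * v.im
      + (I.imI * v.imI + I.imJ * v.imJ + I.imK * v.imK) • (1 : Quaternion ℝ) := by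
  have hre := I_re hI
  ext <;>
    simp [Quaternion.re_mul, Quaternion.imI_mul, Quaternion.imJ_mul, Quaternion.imK_mul, hre] <;>
    ring

lemma im_mul_im (q : Quaternion ℝ) : q.im * q.im = -((‖q.im‖ ^ 2 : ℝ) : Quaternion ℝ) := by
  have h1 : q.im * q.im = -(q.im * star q.im) := by
    rw [show star q.im = -q.im by ext <;> simp, mul_neg, neg_neg]
  rw [h1, Quaternion.self_mul_star,
    show Quaternion.normSq q.im = ‖q.im‖ ^ 2 by rw [pow_two, ← Quaternion.normSq_eq_norm_mul_self]]

noncomputable def dN (I : Quaternion ℝ) : Quaternion ℝ →L[ℝ] ℝ := (innerSL ℝ I).comp qim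

noncomputable def dZq (I : Quaternion ℝ) : Quaternion ℝ →L[ℝ] ℂ :=
  Complex.ofRealCLM.comp qre + (dN I).smulRight Complex.I

noncomputable def dIq (β : ℝ) (I : Quaternion ℝ) : Quaternion ℝ →L[ℝ] Quaternion ℝ :=
  β⁻¹ • (qim - (dN I).smulRight I)

@[simp] lemma dN_apply (I v : Quaternion ℝ) : dN I v = ⟪I, v.im⟫ := rfl

@[simp] lemma dZq_apply (I v : Quaternion ℝ) :
    dZq I v = (v.re : ℂ) + ⟪I, v.im⟫ • Complex.I := rfl

@[simp] lemma dIq_apply (β : ℝ) (I v : Quaternion ℝ) :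
    dIq β I v = β⁻¹ • (v.im - ⟪I, v.im⟫ • I) := rfl

lemma dZq_I_mul {I : Quaternion ℝ} (hI : I ^ 2 = -1) (v : Quaternion ℝ) :
    dZq I (I * v) = Complex.I * dZq I v := by
  simp only [dZq_apply]
  apply Complex.ext
  · simp [key1 hI v, inner_I_im, Complex.real_smul]
  · simp [key2 hI v, inner_I_im, Complex.real_smul]

lemma dIq_I_mul {I : Quaternion ℝ} (hI : I ^ 2 = -1) (β : ℝ) (v : Quaternion ℝ) :
    dIq β I (I * v) = I * dIq β I v := by
  have hII : I * I = -1 := by rw [← pow_two]; exact hI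
  simp only [dIq_apply]
  rw [key2 hI v, key3 hI v, ← inner_I_im I v, mul_smul_comm, mul_sub, mul_smul_comm, hII]
  simp only [smul_neg]
  module

lemma CRkey {I : Quaternion ℝ} (hI : I ^ 2 = -1) (A B : ℂ →L[ℝ] Quaternion ℝ)
    (h1 : A 1 = B Complex.I) (h2 : A Complex.I = -B 1) (ζ : ℂ) :
    A (Complex.I * ζ) + I * B (Complex.I * ζ) = I * (A ζ + I * B ζ) := by
  have hxi : ∀ (M : ℂ →L[ℝ] Quaternion ℝ) (ξ : ℂ), M ξ = ξ.re • M 1 + ξ.im • M Complex.I := by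
    intro M ξ
    have h : ξ = ξ.re • (1 : ℂ) + ξ.im • Complex.I := by
      apply Complex.ext <;> simp
    conv_lhs => rw [h]
    rw [map_add, map_smul, map_smul]
  have hII : ∀ w : Quaternion ℝ, I * (I * w) = -w := fun w => by
    rw [← mul_assoc, ← pow_two, hI, neg_one_mul]
  rw [hxi A (Complex.I * ζ), hxi B (Complex.I * ζ), hxi A ζ, hxi B ζ]
  simp only [Complex.mul_re, Complex.mul_im, Complex.I_re, Complex.I_im, h1, h2,
    zero_mul, one_mul, zero_sub, zero_add]
  simp only [mul_add, mul_smul_comm, hII, smul_neg, neg_smul, neg_neg]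
  module


/-- **The real differential of a slice regular function commutes with left
multiplication by the imaginary unit of the point**: at `x = α + Iβ` (`β > 0`,
`I ∈ 𝕊`) one has `(df)ₓ(I·v) = I·((df)ₓ v)` for every `v ∈ ℍ`; hence when
`(df)ₓ` is invertible the push-forward structure `J^f = (df) ∘ J ∘ (df)⁻¹` acts
at `f x` as left multiplication by `I`. -/
theorem differential_commutes_with_I
    (D : Set ℂ) (hDopen : IsOpen D)
    (hDsymm : ∀ z ∈ D, (starRingEnd ℂ) z ∈ D)
    (F₁ F₂ : ℂ → Quaternion ℝ)
    (hstem : ∀ z ∈ D,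
      F₁ ((starRingEnd ℂ) z) = F₁ z ∧ F₂ ((starRingEnd ℂ) z) = - F₂ z)
    (f : Quaternion ℝ → Quaternion ℝ)
    (hslice : ∀ z ∈ D, ∀ I : Quaternion ℝ, I ^ 2 = -1 →
      f ((z.re : Quaternion ℝ) + I * (z.im : Quaternion ℝ)) = F₁ z + I * F₂ z)
    (D₁ D₂ : ℂ → (ℂ →L[ℝ] Quaternion ℝ))
    (hF₁ : ∀ z ∈ D, HasFDerivAt F₁ (D₁ z) z)
    (hF₂ : ∀ z ∈ D, HasFDerivAt F₂ (D₂ z) z)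
    (hC1 : ContinuousOn D₁ D ∧ ContinuousOn D₂ D)
    (hCR : ∀ z ∈ D, D₁ z 1 = D₂ z Complex.I ∧ D₁ z Complex.I = - D₂ z 1)
    (z : ℂ) (hz : z ∈ D) (hβ : 0 < z.im)
    (I : Quaternion ℝ) (hI : I ^ 2 = -1) :
    ∃ L : Quaternion ℝ →L[ℝ] Quaternion ℝ,
      HasFDerivAt f L ((z.re : Quaternion ℝ) + I * (z.im : Quaternion ℝ)) ∧
      ∀ v : Quaternion ℝ, L (I * v) = I * L v := by
  obtain ⟨hcr1, hcr2⟩ := hCR z hz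
  have hβne : z.im ≠ 0 := ne_of_gt hβ
  have hIre := I_re hI
  have hInorm := norm_I hI
  set x₀ : Quaternion ℝ := (z.re : Quaternion ℝ) + I * (z.im : Quaternion ℝ) with hx₀
  have hx₀im : x₀.im = z.im • I := by
    rw [hx₀, Quaternion.mul_coe_eq_smul]
    ext <;> simp [hIre]
  have hx₀re : x₀.re = z.re := by
    rw [hx₀, Quaternion.mul_coe_eq_smul]
    simp [hIre]
  have hx₀imnorm : ‖x₀.im‖ = z.im := by
    rw [hx₀im, norm_smul, hInorm, mul_one, Real.norm_eq_abs, abs_of_pos hβ]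
  have hx₀imne : x₀.im ≠ 0 := by
    intro hcon
    rw [hcon, norm_zero] at hx₀imnorm
    exact hβne hx₀imnorm.symm
  -- derivative of y ↦ ‖y.im‖
  have hN : HasFDerivAt (fun y : Quaternion ℝ => ‖y.im‖) (dN I) x₀ := by
    have h1 : HasFDerivAt (fun y : Quaternion ℝ => ‖qim y‖ ^ 2)
        (2 • (innerSL ℝ (qim x₀)).comp qim) x₀ := (qim.hasFDerivAt (x := x₀)).norm_sq
    have hne : ‖qim x₀‖ ^ 2 ≠ 0 := by
      simp only [qim_apply, hx₀imnorm]
      exact pow_ne_zero _ hβne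
    have h2 := h1.sqrt hne
    refine (h2.congr_of_eventuallyEq (Filter.Eventually.of_forall fun y => ?_)).congr_fderiv ?_
    · exact (Real.sqrt_sq (norm_nonneg _)).symm
    · ext v
      simp only [ContinuousLinearMap.coe_smul', Pi.smul_apply, ContinuousLinearMap.coe_comp',
        Function.comp_apply, qim_apply, dN_apply, smul_eq_mul,
        ContinuousLinearMap.smul_apply]
      rw [hx₀imnorm, hx₀im, Real.sqrt_sq hβ.le]
      simp only [innerSL_apply_apply, real_inner_smul_left, smul_eq_mul, nsmul_eq_mul,
        Nat.cast_ofNat]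
      field_simp
  -- derivative of Z
  have hZ : HasFDerivAt (fun y : Quaternion ℝ => ((y.re : ℝ) : ℂ) + ‖y.im‖ • Complex.I)
      (dZq I) x₀ := by
    have ha : HasFDerivAt (fun y : Quaternion ℝ => ((y.re : ℝ) : ℂ))
        (Complex.ofRealCLM.comp qre) x₀ := (Complex.ofRealCLM.comp qre).hasFDerivAt
    exact ha.add (hN.smul_const Complex.I)
  -- derivative of Iq
  have hIqD : HasFDerivAt (fun y : Quaternion ℝ => ‖y.im‖⁻¹ • y.im) (dIq z.im I) x₀ := by
    have hinv : HasFDerivAt (fun y : Quaternion ℝ => ‖y.im‖⁻¹)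
        ((-(z.im ^ 2)⁻¹) • dN I) x₀ := by
      have h := (hasDerivAt_inv (x := ‖x₀.im‖)
        (by rw [hx₀imnorm]; exact hβne)).comp_hasFDerivAt x₀ hN
      rw [hx₀imnorm] at h
      exact h
    have h := hinv.smul (qim.hasFDerivAt (x := x₀))
    refine h.congr_fderiv (ContinuousLinearMap.ext fun v => ?_)
    simp only [ContinuousLinearMap.add_apply, ContinuousLinearMap.coe_smul', Pi.smul_apply,
      ContinuousLinearMap.smulRight_apply, ContinuousLinearMap.smul_apply, qim_apply,
      dIq_apply, dN_apply, smul_eq_mul]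
    rw [hx₀imnorm, hx₀im]
    match_scalars <;> (field_simp; try ring)
  -- Z x₀ = z
  have hZx₀ : ((x₀.re : ℝ) : ℂ) + ‖x₀.im‖ • Complex.I = z := by
    apply Complex.ext <;> simp [hx₀re, hx₀imnorm, Complex.real_smul]
  -- composed derivatives
  have hcomp1 : HasFDerivAt (fun y : Quaternion ℝ => F₁ (((y.re : ℝ) : ℂ) + ‖y.im‖ • Complex.I))
      ((D₁ z).comp (dZq I)) x₀ := by
    have h : HasFDerivAt F₁ (D₁ z) (((x₀.re : ℝ) : ℂ) + ‖x₀.im‖ • Complex.I) := by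
      rw [hZx₀]; exact hF₁ z hz
    exact h.comp x₀ hZ
  have hcomp2 : HasFDerivAt (fun y : Quaternion ℝ => F₂ (((y.re : ℝ) : ℂ) + ‖y.im‖ • Complex.I))
      ((D₂ z).comp (dZq I)) x₀ := by
    have h : HasFDerivAt F₂ (D₂ z) (((x₀.re : ℝ) : ℂ) + ‖x₀.im‖ • Complex.I) := by
      rw [hZx₀]; exact hF₂ z hz
    exact h.comp x₀ hZ
  have hmul := hIqD.mul' hcomp2
  have hIqx₀ : ‖x₀.im‖⁻¹ • x₀.im = I := by
    rw [hx₀imnorm, hx₀im, smul_smul, inv_mul_cancel₀ hβne, one_smul]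
  rw [hIqx₀, hZx₀] at hmul
  have hg := hcomp1.add hmul
  -- f agrees with the slice formula near x₀
  have hev : ∀ᶠ y in nhds x₀, y.im ≠ 0 ∧ (((y.re : ℝ) : ℂ) + ‖y.im‖ • Complex.I) ∈ D := by
    have hc1 : Continuous fun y : Quaternion ℝ => y.im := Quaternion.continuous_im
    have hcZ : Continuous fun y : Quaternion ℝ => ((y.re : ℝ) : ℂ) + ‖y.im‖ • Complex.I :=
      (Complex.continuous_ofReal.comp Quaternion.continuous_re).add
        ((Quaternion.continuous_im.norm).smul continuous_const)
    have h1 : {y : Quaternion ℝ | y.im ≠ 0} ∈ nhds x₀ :=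
      (isOpen_compl_singleton.preimage hc1).mem_nhds hx₀imne
    have h2 : {y : Quaternion ℝ | (((y.re : ℝ) : ℂ) + ‖y.im‖ • Complex.I) ∈ D} ∈ nhds x₀ :=
      (hDopen.preimage hcZ).mem_nhds (by simp only [Set.mem_preimage, hZx₀]; exact hz)
    filter_upwards [h1, h2] with y hy1 hy2
    exact ⟨hy1, hy2⟩
  have hfg : f =ᶠ[nhds x₀]
      (fun y : Quaternion ℝ => F₁ (((y.re : ℝ) : ℂ) + ‖y.im‖ • Complex.I)
        + (‖y.im‖⁻¹ • y.im) * F₂ (((y.re : ℝ) : ℂ) + ‖y.im‖ • Complex.I)) := by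
    refine hev.mono fun y hy => ?_
    obtain ⟨him, hmem⟩ := hy
    have hn : (0 : ℝ) < ‖y.im‖ := norm_pos_iff.2 him
    set w : ℂ := ((y.re : ℝ) : ℂ) + ‖y.im‖ • Complex.I with hw
    have hwre : w.re = y.re := by simp [hw, Complex.real_smul]
    have hwim : w.im = ‖y.im‖ := by simp [hw, Complex.real_smul]
    have hIqsq : (‖y.im‖⁻¹ • y.im) ^ 2 = -1 := by
      rw [pow_two, smul_mul_assoc, mul_smul_comm, smul_smul, im_mul_im]
      rw [show ((‖y.im‖ ^ 2 : ℝ) : Quaternion ℝ) = (‖y.im‖ ^ 2 : ℝ) • (1 : Quaternion ℝ) from by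
        rw [← Quaternion.coe_one, Quaternion.smul_coe, mul_one]]
      rw [smul_neg, smul_smul]
      rw [show ‖y.im‖⁻¹ * ‖y.im‖⁻¹ * ‖y.im‖ ^ 2 = 1 from by field_simp [pow_two]]
      rw [one_smul]
    have hpt := hslice w hmem (‖y.im‖⁻¹ • y.im) hIqsq
    rw [hwre, hwim] at hpt
    have hpoint : ((y.re : Quaternion ℝ) + (‖y.im‖⁻¹ • y.im) * ((‖y.im‖ : ℝ) : Quaternion ℝ)) = y := by
      rw [show (‖y.im‖⁻¹ • y.im) * ((‖y.im‖ : ℝ) : Quaternion ℝ) = y.im from by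
          rw [Quaternion.mul_coe_eq_smul, smul_smul, mul_inv_cancel₀ hn.ne', one_smul],
        Quaternion.re_add_im]
    rw [hpoint] at hpt
    exact hpt
  refine ⟨_, hg.congr_of_eventuallyEq hfg, ?_⟩
  intro v
  simp only [ContinuousLinearMap.add_apply, ContinuousLinearMap.coe_comp', Function.comp_apply,
    ContinuousLinearMap.coe_smul', Pi.smul_apply, ContinuousLinearMap.smulRight_apply,
    smul_eq_mul]
  rw [dZq_I_mul hI, dIq_I_mul hI]
  rw [← add_assoc, ← add_assoc, CRkey hI (D₁ z) (D₂ z) hcr1 hcr2 (dZq I v)]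
  noncomm_ring
end

section
/- Twistor lift identity for slice functions: let f : Ω_D → ℍ be a slice function. For every u in the real span of {1, i} in ℍ, the element I = (1 + u·j)⁻¹·i·(1 + u·j) belongs to 𝕊, and for every α + iβ ∈ D with β > 0 one has the quaternionic identity (1 + u·j)·f(α + Iβ) = f(α + iβ) + u·j·f(α − iβ), where α + iβ and α − iβ are viewed as quaternions in Ω_D (with imaginary units i and −i respectively). -/
/-- The quaternion imaginary unit `i`. -/
noncomputable def qi : Quaternion ℝ := ⟨0, 1, 0, 0⟩

/-- The quaternion imaginary unit `j`. -/
noncomputable def qj : Quaternion ℝ := ⟨0, 0, 1, 0⟩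

/-!
Write `q = 1 + u j`. Since `u j` is purely imaginary, `q ≠ 0`, so `I = q⁻¹ i q` squares to `-1`
and `q I = i q`. Because `u` commutes with `i` and `i` anticommutes with `j`, `i q = i - u j i`.
Evaluating `f` at the units `I`, `i` and `-i` (the last one reads `α - iβ` as `α + (-i)β`),
both sides become `(1 + u j) F₁ + (i - u j i) F₂`.
-/

lemma conj_sq_eq_neg_one {R : Type*} [DivisionRing R] {q x : R} (hq : q ≠ 0) (hx : x ^ 2 = -1) :
    (q⁻¹ * x * q) ^ 2 = -1 := by
  rw [GroupWithZero.conj_pow₀ hq, hx, mul_neg_one, neg_mul, inv_mul_cancel₀ hq]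

lemma one_add_mul_mul_add_mul_mul_of_anticommute {R : Type*} [Ring R] {I J u : R}
    (hIu : Commute I u) (hIJ : I * J = -(J * I)) (a b : R) :
    (1 + u * J) * a + I * (1 + u * J) * b = a + I * b + u * J * (a + -I * b) := by
  have hIuJ : I * (u * J) = -(u * J * I) := by
    rw [← mul_assoc, hIu.eq, mul_assoc, hIJ, mul_neg, mul_assoc]
  rw [mul_add I, mul_one, hIuJ]
  noncomm_ring

@[simp] lemma qi_re : qi.re = 0 := rfl
@[simp] lemma qi_imI : qi.imI = 1 := rfl
@[simp] lemma qi_imJ : qi.imJ = 0 := rfl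
@[simp] lemma qi_imK : qi.imK = 0 := rfl
@[simp] lemma qj_re : qj.re = 0 := rfl
@[simp] lemma qj_imI : qj.imI = 0 := rfl
@[simp] lemma qj_imJ : qj.imJ = 1 := rfl
@[simp] lemma qj_imK : qj.imK = 0 := rfl

lemma qi_sq : qi ^ 2 = -1 := by
  ext <;> simp [sq, Quaternion.re_one, Quaternion.imI_one, Quaternion.imJ_one, Quaternion.imK_one]

lemma qi_mul_qj : qi * qj = -(qj * qi) := by
  ext <;> simp

lemma commute_qi_of_mem_span {u : Quaternion ℝ}
    (hu : u ∈ Submodule.span ℝ ({1, qi} : Set (Quaternion ℝ))) : Commute qi u := by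
  obtain ⟨a, b, rfl⟩ := Submodule.mem_span_pair.mp hu
  exact ((Commute.one_right qi).smul_right a).add_right ((Commute.refl qi).smul_right b)

lemma one_add_mul_qj_ne_zero {u : Quaternion ℝ}
    (hu : u ∈ Submodule.span ℝ ({1, qi} : Set (Quaternion ℝ))) : 1 + u * qj ≠ 0 := by
  obtain ⟨a, b, rfl⟩ := Submodule.mem_span_pair.mp hu
  intro h
  simpa [Quaternion.re_one, Quaternion.imJ_one, Quaternion.re_zero]
    using congrArg QuaternionAlgebra.re h

theorem twistor_lift_identity_general
    (D : Set ℂ)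
    (F₁ F₂ : ℂ → Quaternion ℝ)
    (f : Quaternion ℝ → Quaternion ℝ)
    (hslice : ∀ z ∈ D, ∀ I : Quaternion ℝ, I ^ 2 = -1 →
      f ((z.re : Quaternion ℝ) + I * (z.im : Quaternion ℝ)) = F₁ z + I * F₂ z)
    (u : Quaternion ℝ) (hu : u ∈ Submodule.span ℝ ({1, qi} : Set (Quaternion ℝ))) :
    ((1 + u * qj)⁻¹ * qi * (1 + u * qj)) ^ 2 = -1 ∧
    ∀ z ∈ D, 0 < z.im →
      (1 + u * qj) *
          f ((z.re : Quaternion ℝ)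
              + ((1 + u * qj)⁻¹ * qi * (1 + u * qj)) * (z.im : Quaternion ℝ))
        = f ((z.re : Quaternion ℝ) + qi * (z.im : Quaternion ℝ))
          + u * qj * f ((z.re : Quaternion ℝ) - qi * (z.im : Quaternion ℝ)) := by
  have hq := one_add_mul_qj_ne_zero hu
  have hI := conj_sq_eq_neg_one hq qi_sq
  refine ⟨hI, fun z hz _ => ?_⟩
  have hneg_qi : (-qi) ^ 2 = -1 := by rw [neg_sq, qi_sq]
  rw [hslice z hz _ hI, hslice z hz qi qi_sq, sub_eq_add_neg, ← neg_mul,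
    hslice z hz (-qi) hneg_qi, mul_add, ← mul_assoc, ← mul_assoc, mul_inv_cancel_left₀ hq]
  exact one_add_mul_mul_add_mul_mul_of_anticommute (commute_qi_of_mem_span hu) qi_mul_qj _ _

/-- **Twistor lift identity for slice functions**: for every `u` in the real span
of `{1, i}` the element `I = (1 + u·j)⁻¹·i·(1 + u·j)` lies in `𝕊`, and for
`α + iβ ∈ D` with `β > 0` one has
`(1 + u·j)·f(α + Iβ) = f(α + iβ) + u·j·f(α - iβ)`. -/
theorem twistor_lift_identity
    (D : Set ℂ) (hne : D.Nonempty)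
    (hDsymm : ∀ z ∈ D, (starRingEnd ℂ) z ∈ D)
    (F₁ F₂ : ℂ → Quaternion ℝ)
    (hstem : ∀ z ∈ D,
      F₁ ((starRingEnd ℂ) z) = F₁ z ∧ F₂ ((starRingEnd ℂ) z) = - F₂ z)
    (f : Quaternion ℝ → Quaternion ℝ)
    (hslice : ∀ z ∈ D, ∀ I : Quaternion ℝ, I ^ 2 = -1 →
      f ((z.re : Quaternion ℝ) + I * (z.im : Quaternion ℝ)) = F₁ z + I * F₂ z)
    (u : Quaternion ℝ) (hu : u ∈ Submodule.span ℝ ({1, qi} : Set (Quaternion ℝ))) :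
    ((1 + u * qj)⁻¹ * qi * (1 + u * qj)) ^ 2 = -1 ∧
    ∀ z ∈ D, 0 < z.im →
      (1 + u * qj) *
          f ((z.re : Quaternion ℝ)
              + ((1 + u * qj)⁻¹ * qi * (1 + u * qj)) * (z.im : Quaternion ℝ))
        = f ((z.re : Quaternion ℝ) + qi * (z.im : Quaternion ℝ))
          + u * qj * f ((z.re : Quaternion ℝ) - qi * (z.im : Quaternion ℝ)) :=
  twistor_lift_identity_general D F₁ F₂ f hslice u hu
end

section
/- Slice regular functions with twistor lift in a plane that extend to the reals are constant: let D ⊆ ℂ be a nonempty connected open set symmetric under complex conjugation with D ∩ ℝ ≠ ∅, let g, h : D → ℂ be holomorphic, and let c₀, c₁, c₂, c₃ ∈ ℂ with (c₂, c₃) ≠ (0, 0). If c₀ + c₂·g(v) + c₃·h(v) = 0 and c₁ − c₂·conj(h(conj v)) + c₃·conj(g(conj v)) = 0 for every v ∈ D, then g and h are constant on D. -/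
/- `conj` is complex conjugation; holomorphic means complex-differentiable on the
open set `D`.  The equations below encode that the twistor lift
`[1, u, g(v) - u·conj(h(conj v)), h(v) + u·conj(g(conj v))]` of a slice regular
function extending through the real axis lies in the plane
`c₀X₀ + c₁X₁ + c₂X₂ + c₃X₃ = 0` of `ℂℙ³`. -/

/-- **Slice regular functions with twistor lift in a plane that extend to the
reals are constant**. -/
theorem twistor_lift_in_plane_constant
    (D : Set ℂ) (hne : D.Nonempty) (hDopen : IsOpen D) (hDconn : IsConnected D)
    (hDsymm : ∀ z ∈ D, (starRingEnd ℂ) z ∈ D)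
    (hDreal : ∃ x ∈ D, x.im = 0)
    (g h : ℂ → ℂ)
    (hg : DifferentiableOn ℂ g D) (hh : DifferentiableOn ℂ h D)
    (c₀ c₁ c₂ c₃ : ℂ) (hc : (c₂, c₃) ≠ (0, 0))
    (heq₁ : ∀ v ∈ D, c₀ + c₂ * g v + c₃ * h v = 0)
    (heq₂ : ∀ v ∈ D,
      c₁ - c₂ * (starRingEnd ℂ) (h ((starRingEnd ℂ) v))
        + c₃ * (starRingEnd ℂ) (g ((starRingEnd ℂ) v)) = 0) :
    ∃ a b : ℂ, ∀ v ∈ D, g v = a ∧ h v = b := by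
  set s : ℂ := c₂ * (starRingEnd ℂ) c₂ + c₃ * (starRingEnd ℂ) c₃ with hs_def
  have hs : s ≠ 0 := by
    have h23 : c₂ ≠ 0 ∨ c₃ ≠ 0 := by
      by_contra hcon
      push_neg at hcon
      exact hc (by simp [hcon.1, hcon.2])
    have : s = ((Complex.normSq c₂ + Complex.normSq c₃ : ℝ) : ℂ) := by
      rw [hs_def]
      push_cast
      rw [Complex.mul_conj, Complex.mul_conj]
    rw [this]
    norm_cast
    rcases h23 with h2 | h3
    · have := Complex.normSq_pos.mpr h2
      have := Complex.normSq_nonneg c₃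
      positivity
    · have := Complex.normSq_pos.mpr h3
      have := Complex.normSq_nonneg c₂
      positivity
  refine ⟨(-(c₀ * (starRingEnd ℂ) c₂) - c₃ * (starRingEnd ℂ) c₁) / s,
          (c₂ * (starRingEnd ℂ) c₁ - c₀ * (starRingEnd ℂ) c₃) / s, fun v hv => ?_⟩
  have e1 := heq₁ v hv
  have e2 := heq₂ ((starRingEnd ℂ) v) (hDsymm v hv)
  simp only [Complex.conj_conj] at e2
  have e2' := congrArg (starRingEnd ℂ) e2
  simp only [map_add, map_sub, map_mul, map_zero, Complex.conj_conj] at e2'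
  constructor
  · rw [eq_div_iff hs]
    linear_combination (starRingEnd ℂ) c₂ * e1 + c₃ * e2'
  · rw [eq_div_iff hs]
    linear_combination (starRingEnd ℂ) c₃ * e1 - c₂ * e2'
end

section
/- Image of the slice regular function f(x) = x·(1 − I_x·i)/2: define f on nonreal quaternions by f(α + Iβ) = (α + Iβ)·(1 − I·i)/2 for α, β ∈ ℝ with β > 0 and I ∈ 𝕊. Then for I = a·i + b·j + c·k ∈ 𝕊 (so a² + b² + c² = 1) one has the explicit formula 2·f(α + Iβ) = α(a+1) + β(a+1)·i + (βb − αc)·j + (αb + βc)·k. Moreover, the image of the set {α + Iβ : α ∈ ℝ, β > 0, I ∈ 𝕊, I ≠ −i} under f equals {q = q₀ + q₁i + q₂j + q₃k ∈ ℍ : q₁ > 0}. -/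
/-- The quaternion imaginary unit `k`. -/
noncomputable def qk : Quaternion ℝ := ⟨0, 0, 0, 1⟩

/-!
Writing `I = a·i + b·j + c·k`, a direct expansion gives
`(α + Iβ)(1 - I·i) = α(a+1) + β(a+1)i + (βb - αc)j + (αb + βc)k`, where `a² + b² + c² = 1`
is used for the `i`-coefficient. Since `|a| ≤ 1`, with `a = -1` only for `I = -i`, the
`i`-coefficient `β(a+1)/2` of `f(α + Iβ)` is positive on the given set. Conversely the formula
can be inverted explicitly for every `q` with `q₁ > 0`.
-/

open Quaternion

@[simp] lemma qi_components : qi.re = 0 ∧ qi.imI = 1 ∧ qi.imJ = 0 ∧ qi.imK = 0 :=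
  ⟨rfl, rfl, rfl, rfl⟩

@[simp] lemma qj_components : qj.re = 0 ∧ qj.imI = 0 ∧ qj.imJ = 1 ∧ qj.imK = 0 :=
  ⟨rfl, rfl, rfl, rfl⟩

@[simp] lemma qk_components : qk.re = 0 ∧ qk.imI = 0 ∧ qk.imJ = 0 ∧ qk.imK = 1 :=
  ⟨rfl, rfl, rfl, rfl⟩

lemma Quaternion.sq_eq_neg_one_iff (I : ℍ[ℝ]) :
    I ^ 2 = -1 ↔ I.re = 0 ∧ I.imI ^ 2 + I.imJ ^ 2 + I.imK ^ 2 = 1 := by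
  constructor
  · intro h
    have hnorm : normSq I = 1 := by
      have h2 : normSq I ^ 2 = 1 := by rw [← map_pow, h, normSq_neg, map_one]
      exact (pow_eq_one_iff_of_nonneg normSq_nonneg two_ne_zero).1 h2
    have hre : I.re = 0 := sq_eq_neg_normSq.1 (by rw [h, hnorm, coe_one])
    rw [normSq_def', hre] at hnorm
    exact ⟨hre, by linear_combination hnorm⟩
  · rintro ⟨hre, hsum⟩
    have hnorm : normSq I = 1 := by
      rw [normSq_def', hre]
      linear_combination hsum
    rw [sq_eq_neg_normSq.2 hre, hnorm, coe_one]

lemma neg_one_lt_imI_of_sq_eq_neg_one {I : ℍ[ℝ]} (hI : I ^ 2 = -1) (hne : I ≠ -qi) :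
    -1 < I.imI := by
  obtain ⟨hre, hsum⟩ := (sq_eq_neg_one_iff I).1 hI
  refine lt_of_le_of_ne (by nlinarith [sq_nonneg I.imJ, sq_nonneg I.imK]) fun ha => hne ?_
  have hJ : I.imJ = 0 := by nlinarith [sq_nonneg I.imK]
  have hK : I.imK = 0 := by nlinarith [sq_nonneg I.imJ]
  ext <;> simp [hre, ← ha, hJ, hK]

lemma coe_add_mul_coe_mul_one_sub_mul_qi (α β : ℝ) {I : ℍ[ℝ]} (hI : I ^ 2 = -1) :
    ((α : ℍ[ℝ]) + I * (β : ℍ[ℝ])) * (1 - I * qi)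
      = ⟨α * (I.imI + 1), β * (I.imI + 1), β * I.imJ - α * I.imK, α * I.imJ + β * I.imK⟩ := by
  obtain ⟨hre, hsum⟩ := (sq_eq_neg_one_iff I).1 hI
  ext <;> simp [hre]
  · ring
  · linear_combination β * hsum
  · ring
  · ring

/- With `p = 2q`, `N = |q|²` and `N₀ = q₀² + q₁²`: comparing `|p|² = 2(a+1)(α² + β²)` with
`p₀² + p₁² = (a+1)²(α² + β²)` forces `a + 1 = 2N₀/N`; then `α, β` are read off `p₀, p₁`, and
`b, c` solve a 2×2 linear system of determinant `α² + β²`. -/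
lemma exists_inv_two_smul_mk_eq_of_imI_pos (q : ℍ[ℝ]) (hq : 0 < q.imI) :
    ∃ α β a b c : ℝ, 0 < β ∧ a ^ 2 + b ^ 2 + c ^ 2 = 1 ∧
      (2 : ℝ)⁻¹ • (⟨α * (a + 1), β * (a + 1), β * b - α * c, α * b + β * c⟩ : ℍ[ℝ]) = q := by
  have hN₀ : 0 < q.re ^ 2 + q.imI ^ 2 := by positivity
  have hN : 0 < q.re ^ 2 + q.imI ^ 2 + q.imJ ^ 2 + q.imK ^ 2 := by positivity
  set N₀ := q.re ^ 2 + q.imI ^ 2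
  set N := N₀ + q.imJ ^ 2 + q.imK ^ 2
  refine ⟨q.re * N / N₀, q.imI * N / N₀, (2 * N₀ - N) / N, 2 * (q.imI * q.imJ + q.re * q.imK) / N,
    2 * (q.imI * q.imK - q.re * q.imJ) / N, by positivity, ?_, ?_⟩
  · field_simp
    ring
  · ext <;> simp <;> field_simp <;> ring

/-- **Image of the slice regular function `f(x) = x(1 - Iₓ·i)/2`**: with
`I = a·i + b·j + c·k ∈ 𝕊` one has
`2f(α + Iβ) = α(a+1) + β(a+1)i + (βb - αc)j + (αb + βc)k`, and the image of
`{α + Iβ : β > 0, I ∈ 𝕊, I ≠ -i}` under `f` is `{q : q₁ > 0}`. -/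
theorem image_of_basic_slice_regular_function
    (f : Quaternion ℝ → Quaternion ℝ)
    (hf : ∀ (α β : ℝ), 0 < β → ∀ I : Quaternion ℝ, I ^ 2 = -1 →
      f ((α : Quaternion ℝ) + I * (β : Quaternion ℝ))
        = (2 : ℝ)⁻¹ • (((α : Quaternion ℝ) + I * (β : Quaternion ℝ))
            * (1 - I * qi))) :
    (∀ (α β : ℝ), 0 < β → ∀ a b c : ℝ, a ^ 2 + b ^ 2 + c ^ 2 = 1 →
      2 * f ((α : Quaternion ℝ)
          + ((a : ℝ) • qi + (b : ℝ) • qj + (c : ℝ) • qk) * (β : Quaternion ℝ))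
        = (⟨α * (a + 1), β * (a + 1), β * b - α * c, α * b + β * c⟩ : Quaternion ℝ))
    ∧
    f '' {x : Quaternion ℝ | ∃ (α β : ℝ) (I : Quaternion ℝ),
        0 < β ∧ I ^ 2 = -1 ∧ I ≠ -qi ∧ x = (α : Quaternion ℝ) + I * (β : Quaternion ℝ)}
      = {q : Quaternion ℝ | 0 < q.imI} := by
  have hf_eq : ∀ α β : ℝ, 0 < β → ∀ I : ℍ[ℝ], I ^ 2 = -1 →
      f (α + I * β) = (2 : ℝ)⁻¹ • (⟨α * (I.imI + 1), β * (I.imI + 1),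
        β * I.imJ - α * I.imK, α * I.imJ + β * I.imK⟩ : ℍ[ℝ]) :=
    fun α β hβ I hI => by rw [hf α β hβ I hI]; exact congrArg _ (coe_add_mul_coe_mul_one_sub_mul_qi α β hI)
  have hI_sq : ∀ a b c : ℝ, a ^ 2 + b ^ 2 + c ^ 2 = 1 → (a • qi + b • qj + c • qk) ^ 2 = -1 :=
    fun a b c h => (sq_eq_neg_one_iff _).2 (by simpa using h)
  refine ⟨fun α β hβ a b c h => ?_, Set.ext fun q => ⟨?_, fun hq => ?_⟩⟩
  · rw [hf_eq α β hβ _ (hI_sq a b c h)]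
    have two_mul_half : ∀ w : ℍ[ℝ], 2 * ((2 : ℝ)⁻¹ • w) = w := fun w => by
      rw [two_mul, ← add_smul]
      norm_num
    exact (two_mul_half _).trans (by ext <;> simp)
  · rintro ⟨_, ⟨α, β, I, hβ, hI, hne, rfl⟩, rfl⟩
    have ha := neg_one_lt_imI_of_sq_eq_neg_one hI hne
    rw [Set.mem_ofPred_eq, hf_eq α β hβ I hI]
    change 0 < (2 : ℝ)⁻¹ * (β * (I.imI + 1))
    exact mul_pos (by norm_num) (mul_pos hβ (by linarith))
  · obtain ⟨α, β, a, b, c, hβ, h, rfl⟩ := exists_inv_two_smul_mk_eq_of_imI_pos q hq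
    refine ⟨α + (a • qi + b • qj + c • qk) * β, ⟨α, β, _, hβ, hI_sq a b c h, ?_, rfl⟩, ?_⟩
    · intro ha
      have ha' : a = -1 := by simpa using congrArg QuaternionAlgebra.imI ha
      change 0 < (2 : ℝ)⁻¹ * (β * (a + 1)) at hq
      simp [ha'] at hq
    · rw [hf_eq α β hβ _ (hI_sq a b c h)]
      ext <;> simp
end
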